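/- arXiv:0812.1627 — 7 statements merged into one kernel-verified Lean document; each statement's English description precedes it below -/
import Mathlib

section
/- Assume there exist constants C₀ > 0 and n ≥ 0 such that |∂_v A(y,v)| ≤ C₀ and |∂_y A(y,v)| ≤ C₀(1 + |v|^n) for all (y,v) ∈ ℝ². Then for every p ∈ ℝ there exist a constant c ∈ ℝ and a continuously differentiable 1-periodic function v : ℝ → ℝ such that v'(x) = A(x,v(x)) − c for all x ∈ ℝ and ∫₀¹ v(y) dy = p; moreover the pair (v,c) with these properties is unique. -/
open MeasureTheory Filter Set Topology
open scoped NNReal Nat Interval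

/-!
Since `A` is `K`-Lipschitz in `v`, the equation `v' = A(x, v) - c` has a global solution through
every point, and Grönwall's inequality controls its dependence on the data. A barrier argument
shows that raising `c` by `δ` lowers the solution at time one by at least `δ / (K + 2)`; shooting in
`c` therefore gives, for every `a`, a solution with `v(1) = v(0) = a`, which is periodic because
`A` is. The same gap estimate shows that two periodic solutions that meet coincide, so periodic
solutions are strictly ordered and determined by their mean: this is uniqueness. For existence, the
mean of the periodic solution through `(0, a)` is Lipschitz in `a` and unbounded both ways. Indeed,
at the minimum `x₁` of a periodic solution `c = A(x₁, v(x₁))`, so the solution stays within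
`2 e^K sup_y |A(y, v(x₁))|` of `v(x₁)`, while `v(x₁)` is trapped between `p` and the minimum of a
fixed periodic solution lying below. The intermediate value theorem concludes.
-/

section Gronwall

variable {E : Type*} [NormedAddCommGroup E] [NormedSpace ℝ E]

lemma gronwallBound_le_mul_exp {δ K ε x : ℝ} (hε : 0 ≤ ε) (hK : 0 ≤ K) :
    gronwallBound δ K ε x ≤ (δ + ε * x) * Real.exp (K * x) := by
  rcases hK.eq_or_lt with rfl | hK
  · simp [gronwallBound_K0]
  rw [gronwallBound_of_K_ne_0 hK.ne']
  have hexp : Real.exp (K * x) - 1 ≤ K * x * Real.exp (K * x) := by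
    have := mul_le_mul_of_nonneg_right (Real.add_one_le_exp (-(K * x))) (Real.exp_pos (K * x)).le
    rw [← Real.exp_add, neg_add_cancel, Real.exp_zero] at this
    linarith
  have : ε / K * (Real.exp (K * x) - 1) ≤ ε * x * Real.exp (K * x) := by
    rw [div_mul_eq_mul_div, div_le_iff₀ hK]
    nlinarith
  nlinarith [Real.exp_pos (K * x)]

theorem dist_le_of_approx_trajectory {F : ℝ → E → E} {K : ℝ≥0} (hF : ∀ t, LipschitzWith K (F t))
    {f g g' : ℝ → E} {a ε : ℝ} (hf : ∀ t, HasDerivAt f (F t (f t)) t)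
    (hg : ∀ t, HasDerivAt g (g' t) t) (hg' : ∀ t ∈ Ico a (a + 1), dist (g' t) (F t (g t)) ≤ ε) :
    ∀ t ∈ Icc a (a + 1), dist (f t) (g t) ≤ (dist (f a) (g a) + ε) * Real.exp K := by
  intro t ht
  have hε : 0 ≤ ε := dist_nonneg.trans (hg' a ⟨le_rfl, by linarith⟩)
  have hgron := dist_le_of_approx_trajectories_ODE (εf := 0) hF
    (fun s _ => (hf s).continuousAt.continuousWithinAt) (fun s _ => (hf s).hasDerivWithinAt)
    (fun s _ => (dist_self _).le) (fun s _ => (hg s).continuousAt.continuousWithinAt)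
    (fun s _ => (hg s).hasDerivWithinAt) hg' le_rfl t ht
  rw [zero_add] at hgron
  refine hgron.trans ((gronwallBound_le_mul_exp hε K.coe_nonneg).trans ?_)
  have hlen : t - a ≤ 1 := by linarith [ht.2]
  gcongr
  · nlinarith
  · exact mul_le_of_le_one_right K.coe_nonneg hlen

end Gronwall

section GlobalExistence

variable {E : Type*} [NormedAddCommGroup E] [NormedSpace ℝ E]
  {F : ℝ → E → E} {K : ℝ≥0}

lemma norm_integral_le_mul_abs_pow {g : ℝ → E} {D t : ℝ} (k : ℕ)
    (h : ∀ s ∈ Ι 0 t, ‖g s‖ ≤ D * |s| ^ k) :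
    ‖∫ s in (0 : ℝ)..t, g s‖ ≤ D * |t| ^ (k + 1) / (k + 1) := by
  rw [intervalIntegral.norm_intervalIntegral_eq]
  refine (norm_integral_le_of_norm_le (g := fun s => D * |s| ^ k)
    (Continuous.integrableOn_uIoc (by fun_prop))
    ((ae_restrict_mem measurableSet_uIoc).mono h)).trans_eq ?_
  rw [integral_const_mul, mul_div_assoc]
  simpa using congrArg (D * ·) (integral_pow_abs_sub_uIoc (a := 0) (b := t) k)

lemma ODE.hasDerivAt_picard [CompleteSpace E] (hF : Continuous (Function.uncurry F))
    {α : ℝ → E} (hα : Continuous α) (t₀ : ℝ) (x₀ : E) (t : ℝ) :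
    HasDerivAt (ODE.picard F t₀ x₀ α) (F t (α t)) t :=
  ((hF.comp (continuous_id.prodMk hα)).integral_hasStrictDerivAt t₀ t).hasDerivAt.const_add x₀

noncomputable def picardIterate (F : ℝ → E → E) (x₀ : E) (k : ℕ) : ℝ → E :=
  (ODE.picard F 0 x₀)^[k] fun _ => x₀

lemma picardIterate_succ (x₀ : E) (k : ℕ) :
    picardIterate F x₀ (k + 1) = ODE.picard F 0 x₀ (picardIterate F x₀ k) :=
  Function.iterate_succ_apply' _ _ _

lemma continuous_picardIterate [CompleteSpace E] (hF : Continuous (Function.uncurry F))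
    (x₀ : E) (k : ℕ) : Continuous (picardIterate F x₀ k) := by
  induction k with
  | zero => exact continuous_const
  | succ k ih =>
    rw [picardIterate_succ]
    exact continuous_iff_continuousAt.2 fun t => (ODE.hasDerivAt_picard hF ih 0 x₀ t).continuousAt

lemma norm_picardIterate_succ_sub_le [CompleteSpace E] (hF : Continuous (Function.uncurry F))
    (hK : ∀ t, LipschitzWith K (F t)) {x₀ : E} {R M : ℝ} (hM : ∀ s, |s| ≤ R → ‖F s x₀‖ ≤ M)
    (k : ℕ) {t : ℝ} (ht : |t| ≤ R) :
    ‖picardIterate F x₀ (k + 1) t - picardIterate F x₀ k t‖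
      ≤ M * K ^ k * |t| ^ (k + 1) / (k + 1)! := by
  have hsub : ∀ {t}, |t| ≤ R → ∀ s ∈ Ι 0 t, |s| ≤ R := fun ht s hs => by
    simpa using (abs_sub_left_of_mem_uIcc (uIoc_subset_uIcc hs)).trans (by simpa using ht)
  induction k generalizing t with
  | zero =>
    have h := norm_integral_le_mul_abs_pow (g := fun s => F s x₀) (D := M) 0
      fun s hs => by simpa using hM s (hsub ht s hs)
    simpa [picardIterate_succ, picardIterate] using h
  | succ k ih =>
    have hc := fun j => continuous_picardIterate hF x₀ j
    have hint (j : ℕ) : IntervalIntegrable (fun s => F s (picardIterate F x₀ j s)) volume 0 t :=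
      (hF.comp (continuous_id.prodMk (hc j))).intervalIntegrable 0 t
    rw [picardIterate_succ x₀ (k + 1)]
    nth_rw 2 [picardIterate_succ x₀ k]
    rw [ODE.picard_apply, ODE.picard_apply, add_sub_add_left_eq_sub,
      ← intervalIntegral.integral_sub (hint _) (hint _)]
    refine (norm_integral_le_mul_abs_pow (D := K * (M * K ^ k / (k + 1)!)) (k + 1)
      fun s hs => ?_).trans_eq ?_
    · calc ‖F s (picardIterate F x₀ (k + 1) s) - F s (picardIterate F x₀ k s)‖
          ≤ K * ‖picardIterate F x₀ (k + 1) s - picardIterate F x₀ k s‖ := by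
            rw [← dist_eq_norm, ← dist_eq_norm]; exact (hK s).dist_le_mul _ _
        _ ≤ K * (M * K ^ k * |s| ^ (k + 1) / (k + 1)!) := by gcongr; exact ih (hsub ht s hs)
        _ = K * (M * K ^ k / (k + 1)!) * |s| ^ (k + 1) := by ring
    · rw [Nat.factorial_succ (k + 1)]
      push_cast
      field_simp
      ring

theorem tendstoUniformlyOn_picardIterate [CompleteSpace E] (hF : Continuous (Function.uncurry F))
    (hK : ∀ t, LipschitzWith K (F t)) (x₀ : E) (R : ℝ) :
    TendstoUniformlyOn (picardIterate F x₀)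
      (fun t => x₀ + ∑' k, (picardIterate F x₀ (k + 1) t - picardIterate F x₀ k t)) atTop
      (Metric.closedBall 0 R) := by
  have hF₀ : Continuous fun s => F s x₀ := hF.comp (continuous_id.prodMk continuous_const)
  obtain ⟨M, hM⟩ := (isCompact_closedBall (0 : ℝ) R).exists_bound_of_continuousOn hF₀.continuousOn
  have hM' : ∀ s, |s| ≤ R → ‖F s x₀‖ ≤ M := fun s hs => hM s (by simpa using hs)
  have hseries := tendstoUniformlyOn_tsum_nat (s := Metric.closedBall 0 R)
    (f := fun k t => picardIterate F x₀ (k + 1) t - picardIterate F x₀ k t)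
    ((Real.summable_pow_div_factorial (K * R)).mul_left (M * R)) fun k t ht => by
      have ht : |t| ≤ R := by simpa using ht
      have hR : 0 ≤ R := (abs_nonneg t).trans ht
      have hM0 : 0 ≤ M := (norm_nonneg _).trans (hM' t ht)
      refine (norm_picardIterate_succ_sub_le hF hK hM' k ht).trans ?_
      calc M * K ^ k * |t| ^ (k + 1) / (k + 1)! ≤ M * K ^ k * R ^ (k + 1) / k ! := by
            gcongr
            omega
        _ = M * R * ((K * R) ^ k / k !) := by ring
  convert (tendsto_const_nhds (x := x₀)).tendstoUniformlyOn_const _ |>.add hseries using 1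
  · ext N t
    rw [Pi.add_apply, Pi.add_apply, Finset.sum_range_sub (fun k => picardIterate F x₀ k t)]
    simp [picardIterate]
  · rfl

theorem exists_forall_hasDerivAt_of_lipschitzWith [CompleteSpace E]
    (hF : Continuous (Function.uncurry F)) (hK : ∀ t, LipschitzWith K (F t)) (x₀ : E) :
    ∃ α : ℝ → E, α 0 = x₀ ∧ ∀ t, HasDerivAt α (F t (α t)) t := by
  set α := fun t => x₀ + ∑' k, (picardIterate F x₀ (k + 1) t - picardIterate F x₀ k t)
  have hlim : TendstoLocallyUniformly (picardIterate F x₀) α atTop := by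
    refine tendstoLocallyUniformly_iff_forall_isCompact.2 fun S hS => ?_
    obtain ⟨R, hR⟩ := hS.isBounded.subset_closedBall 0
    exact (tendstoUniformlyOn_picardIterate hF hK x₀ R).mono hR
  have hα : Continuous α :=
    hlim.continuous (Frequently.of_forall (continuous_picardIterate hF x₀))
  have hfix : ∀ t, α t = ODE.picard F 0 x₀ α t := by
    intro t
    have hunif := tendstoLocallyUniformly_iff_forall_isCompact.1 hlim [[0, t]] isCompact_uIcc
    have hcomp : TendstoUniformlyOn (fun k s => F s (picardIterate F x₀ k s)) (fun s => F s (α s))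
        atTop [[0, t]] := by
      rw [Metric.tendstoUniformlyOn_iff] at hunif ⊢
      intro ε hε
      filter_upwards [hunif (ε / (K + 1)) (by positivity)] with k hk s hs
      calc dist (F s (α s)) (F s (picardIterate F x₀ k s))
          ≤ K * dist (α s) (picardIterate F x₀ k s) := (hK s).dist_le_mul _ _
        _ ≤ K * (ε / (K + 1)) := by gcongr; exact (hk s hs).le
        _ < ε := by
          rw [mul_div_assoc', div_lt_iff₀ (by positivity)]
          nlinarith [K.coe_nonneg]
    refine tendsto_nhds_unique ((hunif.tendsto_at right_mem_uIcc).comp (tendsto_add_atTop_nat 1)) ?_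
    simp only [Function.comp_def, picardIterate_succ, ODE.picard_apply]
    exact tendsto_const_nhds.add (hcomp.tendsto_intervalIntegral_of_continuousOn
      (Eventually.of_forall fun k =>
        (hF.comp (continuous_id.prodMk (continuous_picardIterate hF x₀ k))).continuousOn))
  refine ⟨α, by rw [hfix, ODE.picard_apply₀], fun t => ?_⟩
  exact (ODE.hasDerivAt_picard hF hα 0 x₀ t).congr_of_eventuallyEq (Eventually.of_forall hfix)

end GlobalExistence

lemma exists_eq_zero_of_mul_sub_le_sub {f : ℝ → ℝ} {κ : ℝ} (hf : Continuous f) (hκ : 0 < κ)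
    (h : ∀ c c', c < c' → κ * (c' - c) ≤ f c - f c') : ∃ c, f c = 0 := by
  set T := |f 0| / κ + 1
  have hT : 0 < T := by positivity
  have hκT : κ * T = |f 0| + κ := by simp only [T]; field_simp
  have hup := h 0 T hT
  have hdown := h (-T) 0 (by linarith)
  obtain ⟨c, -, hc⟩ := intermediate_value_Icc' (neg_le_self hT.le) hf.continuousOn
    (show (0 : ℝ) ∈ Icc (f T) (f (-T)) from
      ⟨by nlinarith [le_abs_self (f 0)], by nlinarith [neg_abs_le (f 0)]⟩)
  exact ⟨c, hc⟩

lemma Function.Periodic.exists_forall_le {f : ℝ → ℝ} {T : ℝ} (hp : Function.Periodic f T)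
    (hT : 0 < T) (hf : Continuous f) : ∃ x, ∀ y, f x ≤ f y := by
  obtain ⟨x, -, hx⟩ :=
    isCompact_Icc.exists_isMinOn (nonempty_Icc.2 hT.le) (hf.continuousOn (s := Icc 0 T))
  refine ⟨x, fun y => ?_⟩
  obtain ⟨y', hy', hyy'⟩ := hp.exists_mem_Ico hT y 0
  rw [hyy']
  exact hx (Ico_subset_Icc_self (by simpa using hy'))

/-- Barrier argument: wherever `u` touches the line `t ↦ δ (t - t₀) / (K + 2)` on `[t₀, t₀ + 1)`,
its slope is at least `2 δ / (K + 2)`, more than that of the line. -/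
lemma div_le_apply_add_one_of_sub_mul_abs_le {u u' : ℝ → ℝ} {K δ t₀ : ℝ} (hK : 0 ≤ K) (hδ : 0 < δ)
    (hu : ∀ t, HasDerivAt u (u' t) t) (hu' : ∀ t, δ - K * |u t| ≤ u' t) (h₀ : u t₀ = 0) :
    δ / (K + 2) ≤ u (t₀ + 1) := by
  have hK2 : 0 < K + 2 := by linarith
  have hbarrier : ∀ t, HasDerivAt (fun t => δ * (t - t₀) / (K + 2)) (δ / (K + 2)) t := fun t => by
    simpa using (((hasDerivAt_id t).sub_const t₀).const_mul δ).div_const (K + 2)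
  have key := image_le_of_deriv_right_lt_deriv_boundary (a := t₀) (b := t₀ + 1)
    (fun t _ => (hbarrier t).continuousAt.continuousWithinAt)
    (fun t _ => (hbarrier t).hasDerivWithinAt) (by simp [h₀]) hu
    (fun t ht hut => by
      have hpos : 0 ≤ δ * (t - t₀) / (K + 2) := by have := ht.1; positivity
      have hle := hu' t
      rw [← hut, abs_of_nonneg hpos] at hle
      refine lt_of_lt_of_le ?_ hle
      rw [div_lt_iff₀ hK2, sub_mul, mul_assoc, div_mul_cancel₀ _ hK2.ne']
      nlinarith [mul_nonneg (mul_nonneg hK hδ.le) (sub_nonneg.2 ht.2.le)])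
    (right_mem_Icc.2 (by linarith))
  simpa using key

lemma lipschitzWith_of_abs_deriv_le {f : ℝ → ℝ} {C : ℝ} (hf : Differentiable ℝ f)
    (h : ∀ x, |deriv f x| ≤ C) : LipschitzWith C.toNNReal f :=
  lipschitzWith_of_nnnorm_deriv_le hf fun x => by
    rw [← NNReal.coe_le_coe, coe_nnnorm, Real.coe_toNNReal', Real.norm_eq_abs]
    exact le_max_of_le_left (h x)

def IsStationarySolution (A : ℝ → ℝ → ℝ) (c : ℝ) (v : ℝ → ℝ) : Prop :=
  ∀ x, HasDerivAt v (A x (v x) - c) x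

section Stationary

variable {A : ℝ → ℝ → ℝ} {K : ℝ≥0} {c c' : ℝ} {v w : ℝ → ℝ}

lemma lipschitzWith_sub_const (hlip : ∀ y, LipschitzWith K (A y)) (c y : ℝ) :
    LipschitzWith K (fun x => A y x - c) :=
  LipschitzWith.of_dist_le_mul fun x x' => by simpa [dist_sub_right] using (hlip y).dist_le_mul x x'

lemma exists_isStationarySolution (hA : Continuous (Function.uncurry A))
    (hlip : ∀ y, LipschitzWith K (A y)) (c a : ℝ) : ∃ v, IsStationarySolution A c v ∧ v 0 = a :=
  let ⟨v, hv0, hv⟩ := exists_forall_hasDerivAt_of_lipschitzWith (F := fun y x => A y x - c)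
    (hA.sub continuous_const) (lipschitzWith_sub_const hlip c) a
  ⟨v, hv, hv0⟩

namespace IsStationarySolution

lemma continuous (hv : IsStationarySolution A c v) : Continuous v :=
  continuous_iff_continuousAt.2 fun x => (hv x).continuousAt

lemma contDiff (hA : Continuous (Function.uncurry A)) (hv : IsStationarySolution A c v) :
    ContDiff ℝ 1 v := by
  refine contDiff_one_iff_deriv.2 ⟨fun x => (hv x).differentiableAt, ?_⟩
  rw [show deriv v = fun x => A x (v x) - c from funext fun x => (hv x).deriv]
  exact (hA.comp (continuous_id.prodMk hv.continuous)).sub continuous_const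

lemma neg (hv : IsStationarySolution A c v) :
    IsStationarySolution (fun y x => -A y (-x)) (-c) fun x => -v x := fun x =>
  (hv x).neg.congr_deriv (by simp only [neg_neg]; ring)

lemma comp_add_one (hper : ∀ y x, A (y + 1) x = A y x) (hv : IsStationarySolution A c v) :
    IsStationarySolution A c fun x => v (x + 1) := fun x => by
  simpa only [hper] using (hv (x + 1)).comp_add_const x 1

lemma eq_of_apply_eq (hlip : ∀ y, LipschitzWith K (A y)) (hv : IsStationarySolution A c v)
    (hw : IsStationarySolution A c w) {t₀ : ℝ} (h : v t₀ = w t₀) : v = w :=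
  ODE_solution_unique_univ (s := fun _ => univ)
    (fun y => (lipschitzWith_sub_const hlip c y).lipschitzOnWith) (fun t => ⟨hv t, trivial⟩)
    (fun t => ⟨hw t, trivial⟩) h

lemma abs_sub_le (hlip : ∀ y, LipschitzWith K (A y)) (hv : IsStationarySolution A c v)
    (hw : IsStationarySolution A c' w) {a : ℝ} :
    ∀ t ∈ Icc a (a + 1), |v t - w t| ≤ (|v a - w a| + |c - c'|) * Real.exp K := by
  simpa only [Real.dist_eq] using
    dist_le_of_approx_trajectory (lipschitzWith_sub_const hlip c) hv hw fun t _ => by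
      rw [Real.dist_eq, sub_sub_sub_cancel_left]

lemma div_le_sub_of_lt (hlip : ∀ y, LipschitzWith K (A y)) (hv : IsStationarySolution A c v)
    (hw : IsStationarySolution A c' w) (hcc : c < c') {t₀ : ℝ} (h : v t₀ = w t₀) :
    (c' - c) / (K + 2) ≤ v (t₀ + 1) - w (t₀ + 1) :=
  div_le_apply_add_one_of_sub_mul_abs_le K.coe_nonneg (sub_pos.2 hcc) (fun t => (hv t).sub (hw t))
    (fun t => by
      have hAlip := (hlip t).dist_le_mul (v t) (w t)
      rw [Real.dist_eq, Real.dist_eq] at hAlip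
      simp only [Pi.sub_apply]
      linarith [neg_abs_le (A t (v t) - A t (w t))])
    (sub_eq_zero.2 h)

lemma periodic (hlip : ∀ y, LipschitzWith K (A y)) (hper : ∀ y x, A (y + 1) x = A y x)
    (hv : IsStationarySolution A c v) (h : v 1 = v 0) : Function.Periodic v 1 :=
  congrFun ((hv.comp_add_one hper).eq_of_apply_eq hlip hv (t₀ := 0) (by simpa using h))

/-- If the constants differed, the gap estimate `div_le_sub_of_lt` would separate the two solutions
after one period. -/
lemma eq_of_periodic_of_apply_eq (hlip : ∀ y, LipschitzWith K (A y))
    (hv : IsStationarySolution A c v) (hw : IsStationarySolution A c' w)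
    (hvp : Function.Periodic v 1) (hwp : Function.Periodic w 1) {z : ℝ} (h : v z = w z) :
    c = c' ∧ v = w := by
  have hnot : ∀ {c c' v w}, IsStationarySolution A c v → IsStationarySolution A c' w →
      Function.Periodic v 1 → Function.Periodic w 1 → v z = w z → ¬ c < c' := by
    intro c c' v w hv hw hvp hwp h hcc
    have hgap := hv.div_le_sub_of_lt hlip hw hcc h
    rw [hvp z, hwp z, h, sub_self] at hgap
    exact (div_pos (sub_pos.2 hcc) (by positivity)).not_ge hgap
  obtain rfl : c = c' :=
    le_antisymm (not_lt.1 (hnot hw hv hwp hvp h.symm)) (not_lt.1 (hnot hv hw hvp hwp h))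
  exact ⟨rfl, hv.eq_of_apply_eq hlip hw h⟩

lemma lt_of_periodic (hlip : ∀ y, LipschitzWith K (A y))
    (hv : IsStationarySolution A c v) (hw : IsStationarySolution A c' w)
    (hvp : Function.Periodic v 1) (hwp : Function.Periodic w 1) {x₀ : ℝ} (h : v x₀ < w x₀)
    (x : ℝ) : v x < w x := by
  by_contra! hx
  obtain ⟨z, -, hz⟩ := intermediate_value_uIcc (a := x₀) (b := x)
    (hw.continuous.sub hv.continuous).continuousOn
    (show (0 : ℝ) ∈ uIcc (w x₀ - v x₀) (w x - v x) from
      mem_uIcc.2 (Or.inr ⟨by linarith, by linarith⟩))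
  obtain ⟨-, rfl⟩ := hv.eq_of_periodic_of_apply_eq hlip hw hvp hwp (sub_eq_zero.1 hz).symm
  exact h.false

lemma le_of_periodic (hlip : ∀ y, LipschitzWith K (A y))
    (hv : IsStationarySolution A c v) (hw : IsStationarySolution A c' w)
    (hvp : Function.Periodic v 1) (hwp : Function.Periodic w 1) {x₀ : ℝ} (h : v x₀ ≤ w x₀)
    (x : ℝ) : v x ≤ w x := by
  rcases h.lt_or_eq with h | h
  · exact (hv.lt_of_periodic hlip hw hvp hwp h x).le
  · rw [(hv.eq_of_periodic_of_apply_eq hlip hw hvp hwp h).2]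

lemma eq_of_integral_eq (hlip : ∀ y, LipschitzWith K (A y))
    (hv : IsStationarySolution A c v) (hw : IsStationarySolution A c' w)
    (hvp : Function.Periodic v 1) (hwp : Function.Periodic w 1)
    (h : ∫ x in (0 : ℝ)..1, v x = ∫ x in (0 : ℝ)..1, w x) : c = c' ∧ v = w := by
  have integral_lt : ∀ {c c' v w}, IsStationarySolution A c v → IsStationarySolution A c' w →
      Function.Periodic v 1 → Function.Periodic w 1 → v 0 < w 0 →
      ∫ x in (0 : ℝ)..1, v x < ∫ x in (0 : ℝ)..1, w x := fun hv hw hvp hwp h₀ =>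
    intervalIntegral.integral_lt_integral_of_continuousOn_of_le_of_exists_lt zero_lt_one
      hv.continuous.continuousOn hw.continuous.continuousOn
      (fun x _ => (hv.lt_of_periodic hlip hw hvp hwp h₀ x).le) ⟨0, left_mem_Icc.2 zero_le_one, h₀⟩
  rcases lt_trichotomy (v 0) (w 0) with h₀ | h₀ | h₀
  · exact absurd h (integral_lt hv hw hvp hwp h₀).ne
  · exact hv.eq_of_periodic_of_apply_eq hlip hw hvp hwp h₀
  · exact absurd h (integral_lt hw hv hwp hvp h₀).ne'

lemma abs_sub_le_of_periodic (hA : Continuous (Function.uncurry A))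
    (hlip : ∀ y, LipschitzWith K (A y)) (hv : IsStationarySolution A c v)
    (hw : IsStationarySolution A c' w) (hvp : Function.Periodic v 1) (hwp : Function.Periodic w 1) :
    |c - c'| ≤ (K + 2) * (1 + Real.exp K) * |v 0 - w 0| := by
  wlog hcc : c < c' generalizing c c' v w
  · rcases (not_lt.1 hcc).lt_or_eq with hcc | rfl
    · rw [abs_sub_comm, abs_sub_comm (v 0)]
      exact this hw hv hwp hvp hcc
    · simp only [sub_self, abs_zero]
      positivity
  -- compare `v` with the solution of constant `c'` through `(0, v 0)`, then that one with `w`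
  obtain ⟨u, hu, hu₀⟩ := exists_isStationarySolution hA hlip c' (v 0)
  have hgap := hv.div_le_sub_of_lt hlip hu hcc (t₀ := 0) hu₀.symm
  have hflow := hu.abs_sub_le hlip hw (a := 0) 1 (by norm_num)
  rw [zero_add, hvp.eq, div_le_iff₀ (by positivity)] at hgap
  rw [hwp.eq, hu₀, sub_self, abs_zero, add_zero] at hflow
  have hreturn : v 0 - u 1 ≤ (1 + Real.exp K) * |v 0 - w 0| := by
    linarith [neg_abs_le (u 1 - w 0), le_abs_self (v 0 - w 0)]
  rw [abs_sub_comm, abs_of_pos (sub_pos.2 hcc)]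
  calc c' - c ≤ (v 0 - u 1) * (K + 2) := hgap
    _ ≤ (1 + Real.exp K) * |v 0 - w 0| * (K + 2) := by gcongr
    _ = (K + 2) * (1 + Real.exp K) * |v 0 - w 0| := by ring

lemma abs_integral_sub_le (hA : Continuous (Function.uncurry A))
    (hlip : ∀ y, LipschitzWith K (A y)) (hv : IsStationarySolution A c v)
    (hw : IsStationarySolution A c' w) (hvp : Function.Periodic v 1) (hwp : Function.Periodic w 1) :
    |(∫ x in (0 : ℝ)..1, v x) - ∫ x in (0 : ℝ)..1, w x|
      ≤ (1 + (K + 2) * (1 + Real.exp K)) * Real.exp K * |v 0 - w 0| := by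
  have hc := hv.abs_sub_le_of_periodic hA hlip hw hvp hwp
  have hpt : ∀ x ∈ Ι (0 : ℝ) 1,
      ‖v x - w x‖ ≤ (1 + (K + 2) * (1 + Real.exp K)) * Real.exp K * |v 0 - w 0| := fun x hx =>
    calc |v x - w x| ≤ (|v 0 - w 0| + |c - c'|) * Real.exp K :=
          hv.abs_sub_le hlip hw (a := 0) x (by simpa using uIoc_subset_uIcc hx)
      _ ≤ (|v 0 - w 0| + (K + 2) * (1 + Real.exp K) * |v 0 - w 0|) * Real.exp K := by gcongr
      _ = (1 + (K + 2) * (1 + Real.exp K)) * Real.exp K * |v 0 - w 0| := by ring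
  rw [← intervalIntegral.integral_sub (hv.continuous.intervalIntegrable (μ := volume) 0 1)
    (hw.continuous.intervalIntegrable 0 1)]
  simpa using intervalIntegral.norm_integral_le_of_norm_le_const hpt

/-- At a minimum `x₁` the equation forces `c = A x₁ (v x₁)`, so the constant `v x₁` is an
approximate solution whose error is controlled by the size of `A` along the level `v x₁`. -/
lemma abs_sub_le_of_forall_le (hlip : ∀ y, LipschitzWith K (A y)) (hv : IsStationarySolution A c v)
    (hvp : Function.Periodic v 1) {x₁ M : ℝ} (hx₁ : ∀ y, v x₁ ≤ v y)
    (hM : ∀ y, |A y (v x₁)| ≤ M) (x : ℝ) : |v x - v x₁| ≤ 2 * M * Real.exp K := by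
  have hc : c = A x₁ (v x₁) := by
    linarith [IsLocalMin.hasDerivAt_eq_zero (Eventually.of_forall hx₁) (hv x₁)]
  obtain ⟨x', hx', hxx'⟩ := hvp.exists_mem_Ico zero_lt_one x x₁
  have := dist_le_of_approx_trajectory (lipschitzWith_sub_const hlip c) hv
    (fun _ => hasDerivAt_const _ (v x₁)) (ε := 2 * M) (a := x₁) (fun t _ => by
      rw [Real.dist_eq, zero_sub, abs_neg, hc]
      linarith [abs_sub (A t (v x₁)) (A x₁ (v x₁)), hM t, hM x₁]) x' (Ico_subset_Icc_self hx')
  simpa [hxx', Real.dist_eq] using this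

end IsStationarySolution

/-- Shooting in the constant: the return map `c ↦ v_c(1) - a` of the solution with `v_c(0) = a`
is continuous and decreases at a definite rate, so it has a zero. -/
lemma exists_periodic_apply_zero_eq (hA : Continuous (Function.uncurry A))
    (hlip : ∀ y, LipschitzWith K (A y)) (hper : ∀ y x, A (y + 1) x = A y x) (a : ℝ) :
    ∃ c v, IsStationarySolution A c v ∧ Function.Periodic v 1 ∧ v 0 = a := by
  choose u hu hu₀ using fun c => exists_isStationarySolution hA hlip c a
  have hcont : Continuous fun c => u c 1 - a := by
    refine (LipschitzWith.of_dist_le' (K := Real.exp K) fun c c' => ?_).continuous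
    have := (hu c).abs_sub_le hlip (hu c') (a := 0) 1 (by norm_num)
    simp only [hu₀, sub_self, abs_zero, zero_add] at this
    simpa only [Real.dist_eq, sub_sub_sub_cancel_right, mul_comm (Real.exp K)] using this
  obtain ⟨c, hc⟩ := exists_eq_zero_of_mul_sub_le_sub hcont (by positivity : 0 < 1 / ((K : ℝ) + 2))
    fun c c' hcc => by
      have := (hu c).div_le_sub_of_lt hlip (hu c') hcc (t₀ := 0) (by rw [hu₀, hu₀])
      rw [zero_add] at this
      linarith [div_eq_mul_one_div (c' - c) ((K : ℝ) + 2)]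
  exact ⟨c, u c, hu c, (hu c).periodic hlip hper (by rw [hu₀]; linarith), hu₀ c⟩

lemma exists_forall_abs_le (hA : Continuous (Function.uncurry A))
    (hper : ∀ y x, A (y + 1) x = A y x) {s : Set ℝ} (hs : IsCompact s) :
    ∃ M, ∀ y, ∀ q ∈ s, |A y q| ≤ M := by
  obtain ⟨M, hM⟩ := (isCompact_Icc (a := (0 : ℝ)) (b := 1)).prod hs |>.exists_bound_of_continuousOn
    hA.continuousOn
  refine ⟨M, fun y q hq => ?_⟩
  obtain ⟨y', hy', hyy'⟩ := (show Function.Periodic (A · q) 1 from fun y => hper y q).exists_mem_Ico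
    zero_lt_one y 0
  rw [show A y q = A y' q from hyy']
  simpa using hM (y', q) ⟨Ico_subset_Icc_self (by simpa using hy'), hq⟩

/-- The minimum of `v` is trapped between `min w` and `p`, and `v` oscillates by a bounded amount
around its minimum. -/
lemma exists_forall_apply_zero_le (hA : Continuous (Function.uncurry A))
    (hlip : ∀ y, LipschitzWith K (A y)) (hper : ∀ y x, A (y + 1) x = A y x)
    (hw : IsStationarySolution A c' w) (hwp : Function.Periodic w 1) (p : ℝ) :
    ∃ B, ∀ c v, IsStationarySolution A c v → Function.Periodic v 1 → w 0 ≤ v 0 →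
      ∫ x in (0 : ℝ)..1, v x ≤ p → v 0 ≤ B := by
  obtain ⟨x₀, hx₀⟩ := hwp.exists_forall_le zero_lt_one hw.continuous
  obtain ⟨M, hM⟩ := exists_forall_abs_le hA hper (isCompact_Icc (a := w x₀) (b := p))
  refine ⟨p + 2 * M * Real.exp K, fun c v hv hvp h₀ hint => ?_⟩
  obtain ⟨x₁, hx₁⟩ := hvp.exists_forall_le zero_lt_one hv.continuous
  have hmin : v x₁ ≤ p := by
    refine le_trans ?_ hint
    simpa using intervalIntegral.integral_mono_on zero_le_one
      (intervalIntegrable_const (μ := volume)) (hv.continuous.intervalIntegrable 0 1)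
      fun x _ => hx₁ x
  have hosc := hv.abs_sub_le_of_forall_le hlip hvp hx₁
    (fun y => hM y _ ⟨(hx₀ x₁).trans (hw.le_of_periodic hlip hv hwp hvp h₀ x₁), hmin⟩) 0
  linarith [le_abs_self (v 0 - v x₁)]

lemma exists_le_forall_apply_zero (hA : Continuous (Function.uncurry A))
    (hlip : ∀ y, LipschitzWith K (A y)) (hper : ∀ y x, A (y + 1) x = A y x)
    (hw : IsStationarySolution A c' w) (hwp : Function.Periodic w 1) (p : ℝ) :
    ∃ B, ∀ c v, IsStationarySolution A c v → Function.Periodic v 1 → v 0 ≤ w 0 →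
      p ≤ ∫ x in (0 : ℝ)..1, v x → B ≤ v 0 := by
  obtain ⟨B, hB⟩ := exists_forall_apply_zero_le (A := fun y x => -A y (-x))
    (hA.comp (continuous_fst.prodMk continuous_snd.neg)).neg
    (fun y => LipschitzWith.of_dist_le_mul fun x x' => by
      simpa only [dist_neg_neg] using (hlip y).dist_le_mul (-x) (-x'))
    (fun y x => by simp only [hper]) hw.neg (fun x => congrArg Neg.neg (hwp x)) (-p)
  refine ⟨-B, fun c v hv hvp h₀ hint => ?_⟩
  have := hB (-c) (fun x => -v x) hv.neg (fun x => congrArg Neg.neg (hvp x)) (neg_le_neg h₀)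
    (by rw [intervalIntegral.integral_neg]; linarith)
  linarith

theorem exists_periodic_integral_eq (hA : Continuous (Function.uncurry A))
    (hlip : ∀ y, LipschitzWith K (A y)) (hper : ∀ y x, A (y + 1) x = A y x) (p : ℝ) :
    ∃ c v, IsStationarySolution A c v ∧ Function.Periodic v 1 ∧ ∫ x in (0 : ℝ)..1, v x = p := by
  choose γ V hV hVp hV₀ using exists_periodic_apply_zero_eq hA hlip hper
  have hmean : Continuous fun a => ∫ x in (0 : ℝ)..1, V a x :=
    (LipschitzWith.of_dist_le' fun a a' => by
      simpa only [Real.dist_eq, hV₀] using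
        (hV a).abs_integral_sub_le hA hlip (hV a') (hVp a) (hVp a')).continuous
  obtain ⟨Bhi, hBhi⟩ := exists_forall_apply_zero_le hA hlip hper (hV 0) (hVp 0) p
  obtain ⟨Blo, hBlo⟩ := exists_le_forall_apply_zero hA hlip hper (hV 0) (hVp 0) p
  have hup : p ≤ ∫ x in (0 : ℝ)..1, V (max 0 (Bhi + 1)) x := by
    by_contra! h
    have := hBhi _ _ (hV _) (hVp _) (by simp [hV₀]) h.le
    linarith [hV₀ (max 0 (Bhi + 1)), le_max_right 0 (Bhi + 1)]
  have hdown : ∫ x in (0 : ℝ)..1, V (min 0 (Blo - 1)) x ≤ p := by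
    by_contra! h
    have := hBlo _ _ (hV _) (hVp _) (by simp [hV₀]) h.le
    linarith [hV₀ (min 0 (Blo - 1)), min_le_right 0 (Blo - 1)]
  obtain ⟨a, ha⟩ := intermediate_value_univ _ _ hmean ⟨hdown, hup⟩
  exact ⟨γ a, V a, hV a, hVp a, ha⟩

end Stationary

theorem periodic_stationary_exists_unique_general
    (A : ℝ → ℝ → ℝ)
    (hA : ContDiff ℝ 1 (Function.uncurry A))
    (hper : ∀ y v, A (y + 1) v = A y v)
    (C₀ : ℝ)
    (hbound_v : ∀ y v, |deriv (fun w => A y w) v| ≤ C₀) :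
    ∀ p : ℝ, ∃! vc : (ℝ → ℝ) × ℝ,
      ContDiff ℝ 1 vc.1 ∧
      (∀ x, vc.1 (x + 1) = vc.1 x) ∧
      (∀ x, deriv vc.1 x = A x (vc.1 x) - vc.2) ∧
      (∫ y in (0:ℝ)..1, vc.1 y) = p := by
  intro p
  have hAc := hA.continuous
  have hlip (y : ℝ) : LipschitzWith C₀.toNNReal (A y) := lipschitzWith_of_abs_deriv_le
    ((hA.differentiable one_ne_zero).comp ((differentiable_const y).prodMk differentiable_id))
    (hbound_v y)
  obtain ⟨c, v, hv, hvp, hmean⟩ := exists_periodic_integral_eq hAc hlip hper p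
  refine ⟨(v, c), ⟨hv.contDiff hAc, hvp, fun x => (hv x).deriv, hmean⟩, ?_⟩
  rintro ⟨w, c'⟩ ⟨hw, hwp, hwd, hwmean⟩
  have hw' : IsStationarySolution A c' w := fun x =>
    hwd x ▸ (hw.differentiable one_ne_zero x).hasDerivAt
  obtain ⟨rfl, rfl⟩ := hw'.eq_of_integral_eq hlip hv hwp hvp (hwmean.trans hmean.symm)
  rfl

/-- existence and uniqueness of periodic stationary solutions with
prescribed mean, under uniform Lipschitz bound in `v` and polynomial growth of
the `y`-derivative. -/
theorem periodic_stationary_exists_unique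
    (A : ℝ → ℝ → ℝ)
    (hA : ContDiff ℝ 1 (Function.uncurry A))
    (hper : ∀ y v, A (y + 1) v = A y v)
    (C₀ n : ℝ) (hC₀ : 0 < C₀) (hn : 0 ≤ n)
    (hbound_v : ∀ y v, |deriv (fun w => A y w) v| ≤ C₀)
    (hbound_y : ∀ y v, |deriv (fun z => A z v) y| ≤ C₀ * (1 + |v| ^ n)) :
    ∀ p : ℝ, ∃! vc : (ℝ → ℝ) × ℝ,
      ContDiff ℝ 1 vc.1 ∧
      (∀ x, vc.1 (x + 1) = vc.1 x) ∧
      (∀ x, deriv vc.1 x = A x (vc.1 x) - vc.2) ∧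
      (∫ y in (0:ℝ)..1, vc.1 y) = p :=
  periodic_stationary_exists_unique_general A hA hper C₀ hbound_v
end

section
/- Let c₁, c₂ ∈ ℝ and let v₁, v₂ : ℝ → ℝ be continuously differentiable 1-periodic functions with v₁'(x) = A(x,v₁(x)) − c₁ and v₂'(x) = A(x,v₂(x)) − c₂ for all x ∈ ℝ. If ∫₀¹ v₁(y) dy > ∫₀¹ v₂(y) dy, then v₁(y) > v₂(y) for every y ∈ ℝ. -/
/-!
Put `w = v₁ - v₂`. It is 1-periodic, the mean inequality makes it positive at some point `p`, and
at every zero of `w` the equations give `w' = c₂ - c₁`. If `w` also took a nonpositive value,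
periodicity would force both a downward and an upward zero crossing, hence `c₁ = c₂`. Then `v₁`
and `v₂` solve the same ODE `v' = A(x, v) - c₁`, whose right-hand side is locally Lipschitz, and
they agree at an upward crossing before `p`; by uniqueness they agree at `p`, a contradiction.
-/

open MeasureTheory Filter Set Topology

theorem HasDerivAt.nonpos_of_eventually_le_nhdsLT {w : ℝ → ℝ} {w' z : ℝ} (hw : HasDerivAt w w' z)
    (h : ∀ᶠ x in 𝓝[<] z, w z ≤ w x) : w' ≤ 0 := by
  have hslope : Tendsto (slope w z) (𝓝[<] z) (𝓝 w') :=
    (hasDerivAt_iff_tendsto_slope.mp hw).mono_left (nhdsWithin_mono z fun x hx => ne_of_lt hx)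
  refine le_of_tendsto hslope ?_
  filter_upwards [h, self_mem_nhdsWithin] with x hx hxz
  rw [slope_def_field]
  exact div_nonpos_of_nonneg_of_nonpos (sub_nonneg.mpr hx) (sub_nonpos.mpr (le_of_lt hxz))

theorem exists_zero_deriv_nonpos_of_pos_of_nonpos {w : ℝ → ℝ} {a b : ℝ}
    (hw : Differentiable ℝ w) (hab : a < b) (ha : 0 < w a) (hb : w b ≤ 0) :
    ∃ z ∈ Ioc a b, w z = 0 ∧ deriv w z ≤ 0 := by
  set S := Icc a b ∩ w ⁻¹' Iic 0
  have hS : IsClosed S := isClosed_Icc.inter (isClosed_Iic.preimage hw.continuous)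
  have hSbdd : BddBelow S := ⟨a, fun x hx => hx.1.1⟩
  have hzS : sInf S ∈ S := hS.csInf_mem ⟨b, ⟨hab.le, le_rfl⟩, hb⟩ hSbdd
  -- `z` is the first point of `[a, b]` where `w ≤ 0`
  set z := sInf S
  have haz : a < z := lt_of_le_of_ne hzS.1.1 fun h => hzS.2.not_gt (h ▸ ha)
  have hpos : ∀ x ∈ Ico a z, 0 < w x := fun x hx => by
    by_contra! hx₀
    exact hx.2.not_ge (csInf_le hSbdd ⟨⟨hx.1, hx.2.le.trans hzS.1.2⟩, hx₀⟩)
  have hleft : ∀ᶠ x in 𝓝[<] z, 0 < w x := by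
    filter_upwards [Ioo_mem_nhdsLT haz] with x hx using hpos x (Ioo_subset_Ico_self hx)
  have hz : w z = 0 :=
    le_antisymm hzS.2 (ge_of_tendsto hw.continuous.continuousAt.continuousWithinAt
      (hleft.mono fun _ hx => hx.le))
  refine ⟨z, ⟨haz, hzS.1.2⟩, hz, (hw z).hasDerivAt.nonpos_of_eventually_le_nhdsLT ?_⟩
  filter_upwards [hleft] with x hx using hz ▸ hx.le

theorem exists_zero_deriv_nonneg_of_nonpos_of_pos {w : ℝ → ℝ} {a b : ℝ}
    (hw : Differentiable ℝ w) (hab : a < b) (ha : w a ≤ 0) (hb : 0 < w b) :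
    ∃ z ∈ Ico a b, w z = 0 ∧ 0 ≤ deriv w z := by
  have hw_neg : Differentiable ℝ fun x => w (-x) := hw.comp differentiable_neg
  obtain ⟨z, hz, hwz, hdz⟩ := exists_zero_deriv_nonpos_of_pos_of_nonpos hw_neg (neg_lt_neg hab)
    (by simpa using hb) (by simpa using ha)
  refine ⟨-z, ⟨le_neg.mpr hz.2, neg_lt.mpr hz.1⟩, hwz, ?_⟩
  rw [deriv_comp_neg] at hdz
  linarith

theorem Function.Periodic.exists_zero_deriv_nonpos_and_exists_zero_lt_deriv_nonneg
    {w : ℝ → ℝ} {T y p : ℝ} (hw : Function.Periodic w T) (hT : 0 < T)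
    (hd : Differentiable ℝ w) (hy : w y ≤ 0) (hp : 0 < w p) :
    (∃ z, w z = 0 ∧ deriv w z ≤ 0) ∧ ∃ z < p, w z = 0 ∧ 0 ≤ deriv w z := by
  obtain ⟨q, ⟨hpq, -⟩, hq⟩ := hw.exists_mem_Ico hT y p
  obtain ⟨q', ⟨-, hq'p⟩, hq'⟩ := hw.exists_mem_Ico hT y (p - T)
  rw [sub_add_cancel] at hq'p
  have hpq : p < q := lt_of_le_of_ne hpq (by rintro rfl; linarith)
  obtain ⟨z₁, -, hz₁⟩ := exists_zero_deriv_nonpos_of_pos_of_nonpos hd hpq hp (hq ▸ hy)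
  obtain ⟨z₂, hz₂, hz₂'⟩ := exists_zero_deriv_nonneg_of_nonpos_of_pos hd hq'p (hq' ▸ hy) hp
  exact ⟨⟨z₁, hz₁⟩, z₂, hz₂.2, hz₂'⟩

theorem ODE_solution_unique_of_contDiff
    {E : Type*} [NormedAddCommGroup E] [NormedSpace ℝ E] [ProperSpace E]
    {f : ℝ → E → E} (hf : ContDiff ℝ 1 (Function.uncurry f)) {u₁ u₂ : ℝ → E} {a b : ℝ}
    (hu₁ : ∀ t, HasDerivAt u₁ (f t (u₁ t)) t) (hu₂ : ∀ t, HasDerivAt u₂ (f t (u₂ t)) t)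
    (ha : u₁ a = u₂ a) : EqOn u₁ u₂ (Icc a b) := by
  have hc₁ : Continuous u₁ := continuous_iff_continuousAt.2 fun t => (hu₁ t).continuousAt
  have hc₂ : Continuous u₂ := continuous_iff_continuousAt.2 fun t => (hu₂ t).continuousAt
  obtain ⟨M₁, hM₁⟩ :=
    (isCompact_Icc (a := a) (b := b)).exists_bound_of_continuousOn hc₁.continuousOn
  obtain ⟨M₂, hM₂⟩ :=
    (isCompact_Icc (a := a) (b := b)).exists_bound_of_continuousOn hc₂.continuousOn
  set s := Metric.closedBall (0 : E) (max M₁ M₂)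
  obtain ⟨K, hK⟩ := hf.contDiffOn.exists_lipschitzOnWith (s := Icc a b ×ˢ s) one_ne_zero
    ((convex_Icc a b).prod (convex_closedBall 0 _))
    (isCompact_Icc.prod (isCompact_closedBall 0 _))
  have hlip : ∀ t ∈ Ico a b, LipschitzOnWith K (f t) s := fun t ht => by
    simpa [Function.comp_def] using hK.comp (LipschitzWith.prodMk_left t).lipschitzOnWith
      fun x hx => ⟨Ico_subset_Icc_self ht, hx⟩
  have hmem₁ : ∀ t ∈ Ico a b, u₁ t ∈ s := fun t ht =>
    mem_closedBall_zero_iff.2 ((hM₁ t (Ico_subset_Icc_self ht)).trans (le_max_left _ _))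
  have hmem₂ : ∀ t ∈ Ico a b, u₂ t ∈ s := fun t ht =>
    mem_closedBall_zero_iff.2 ((hM₂ t (Ico_subset_Icc_self ht)).trans (le_max_right _ _))
  exact ODE_solution_unique_of_mem_Icc_right hlip hc₁.continuousOn
    (fun t _ => (hu₁ t).hasDerivWithinAt) hmem₁ hc₂.continuousOn
    (fun t _ => (hu₂ t).hasDerivWithinAt) hmem₂ ha

theorem exists_lt_of_intervalIntegral_lt {f g : ℝ → ℝ} {a b : ℝ} (hab : a ≤ b)
    (hf : IntervalIntegrable f volume a b) (hg : IntervalIntegrable g volume a b)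
    (h : ∫ x in a..b, f x < ∫ x in a..b, g x) : ∃ x, f x < g x := by
  by_contra! hgf
  exact h.not_ge (intervalIntegral.integral_mono_on hab hg hf fun x _ => hgf x)

theorem periodic_stationary_ordered_general
    (A : ℝ → ℝ → ℝ)
    (hA : ContDiff ℝ 1 (Function.uncurry A))
    (c₁ c₂ : ℝ) (v₁ v₂ : ℝ → ℝ)
    (hv₁ : ContDiff ℝ 1 v₁) (hv₁per : ∀ x, v₁ (x + 1) = v₁ x)
    (hv₁ode : ∀ x, deriv v₁ x = A x (v₁ x) - c₁)
    (hv₂ : ContDiff ℝ 1 v₂) (hv₂per : ∀ x, v₂ (x + 1) = v₂ x)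
    (hv₂ode : ∀ x, deriv v₂ x = A x (v₂ x) - c₂)
    (hmean : (∫ y in (0:ℝ)..1, v₂ y) < ∫ y in (0:ℝ)..1, v₁ y) :
    ∀ y, v₂ y < v₁ y := by
  intro y
  by_contra! hy
  obtain ⟨p, hp⟩ := exists_lt_of_intervalIntegral_lt zero_le_one
    (hv₂.continuous.intervalIntegrable 0 1) (hv₁.continuous.intervalIntegrable 0 1) hmean
  have hv₁' : ∀ x, HasDerivAt v₁ (A x (v₁ x) - c₁) x := fun x =>
    hv₁ode x ▸ (hv₁.differentiable one_ne_zero x).hasDerivAt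
  have hv₂' : ∀ x, HasDerivAt v₂ (A x (v₂ x) - c₂) x := fun x =>
    hv₂ode x ▸ (hv₂.differentiable one_ne_zero x).hasDerivAt
  have hw' : ∀ x, HasDerivAt (v₁ - v₂) (A x (v₁ x) - c₁ - (A x (v₂ x) - c₂)) x :=
    fun x => (hv₁' x).sub (hv₂' x)
  have hderiv : ∀ z, v₁ z - v₂ z = 0 → deriv (v₁ - v₂) z = c₂ - c₁ := fun z hz => by
    rw [(hw' z).deriv, sub_eq_zero.mp hz]
    ring
  obtain ⟨⟨z₁, hz₁, hz₁'⟩, z₂, hz₂p, hz₂, hz₂'⟩ :=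
    Function.Periodic.exists_zero_deriv_nonpos_and_exists_zero_lt_deriv_nonneg
      (Function.Periodic.sub hv₁per hv₂per) one_pos (fun x => (hw' x).differentiableAt)
      (sub_nonpos.mpr hy) (sub_pos.mpr hp)
  have hc : c₂ = c₁ := by linarith [hderiv z₁ hz₁, hderiv z₂ hz₂]
  subst hc
  exact hp.ne' <| ODE_solution_unique_of_contDiff (f := fun x v => A x v - c₂)
    (hA.sub contDiff_const) hv₁' hv₂' (sub_eq_zero.mp hz₂) ⟨hz₂p.le, le_rfl⟩

/-- periodic stationary solutions with larger mean are pointwise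
larger. -/
theorem periodic_stationary_ordered
    (A : ℝ → ℝ → ℝ)
    (hA : ContDiff ℝ 1 (Function.uncurry A))
    (hper : ∀ y v, A (y + 1) v = A y v)
    (c₁ c₂ : ℝ) (v₁ v₂ : ℝ → ℝ)
    (hv₁ : ContDiff ℝ 1 v₁) (hv₁per : ∀ x, v₁ (x + 1) = v₁ x)
    (hv₁ode : ∀ x, deriv v₁ x = A x (v₁ x) - c₁)
    (hv₂ : ContDiff ℝ 1 v₂) (hv₂per : ∀ x, v₂ (x + 1) = v₂ x)
    (hv₂ode : ∀ x, deriv v₂ x = A x (v₂ x) - c₂)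
    (hmean : (∫ y in (0:ℝ)..1, v₂ y) < ∫ y in (0:ℝ)..1, v₁ y) :
    ∀ y, v₂ y < v₁ y :=
  periodic_stationary_ordered_general A hA c₁ c₂ v₁ v₂ hv₁ hv₁per hv₁ode hv₂ hv₂per hv₂ode hmean
end

section
/- Let α_l, α_r ∈ ℝ and let v_l, v_r be periodic stationary solutions with constants α_l and α_r respectively. Let u : ℝ → ℝ be a twice continuously differentiable function such that u and u' are bounded, −u''(x) + (d/dx)(A(x,u(x))) = 0 for all x ∈ ℝ, u(x) − v_l(x) → 0 as x → −∞, and u(x) − v_r(x) → 0 as x → +∞. Then α_l = α_r, and −u'(x) + A(x,u(x)) = α_l for all x ∈ ℝ. -/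
open MeasureTheory Filter Set Topology

/-- A periodic stationary solution of the viscous conservation law, with
constant `α`. -/
def PerStat (A : ℝ → ℝ → ℝ) (α : ℝ) (v : ℝ → ℝ) : Prop :=
  ContDiff ℝ 1 v ∧ (∀ x, v (x + 1) = v x) ∧ ∀ x, deriv v x = A x (v x) - α

/-! `A x (u x) - u' x` has zero derivative, hence equals a constant `c`. For a periodic
stationary solution `v` with constant `α`, the difference `w = u - v` then satisfies
`w' x = A x (u x) - A x (v x) + (α - c)`. As `A` is periodic in `x` and `u`, `v` are bounded,
`A` is only evaluated on a compact set where it is uniformly continuous, so `w → 0` forces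
`w' → α - c`; a function tending to a limit cannot have a derivative tending to a nonzero
limit, so `α = c` at both ends. -/

theorem Function.Periodic.map_fract {R α : Type*} [Ring R] [LinearOrder R]
    [IsStrictOrderedRing R] [FloorRing R] {f : R → α} (hf : Function.Periodic f 1) (x : R) :
    f (Int.fract x) = f x := by
  rw [Int.fract]
  simpa only [mul_one] using hf.sub_int_mul_eq (x := x) ⌊x⌋

theorem tendsto_sub_of_periodic_of_tendsto_sub {E : Type*} [SeminormedAddCommGroup E]
    {A : ℝ → ℝ → E} (hA : Continuous (Function.uncurry A)) (hper : ∀ y v, A (y + 1) v = A y v)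
    {f g : ℝ → ℝ} {M : ℝ} (hf : ∀ x, |f x| ≤ M) (hg : ∀ x, |g x| ≤ M) {l : Filter ℝ}
    (h : Tendsto (fun x => f x - g x) l (𝓝 0)) :
    Tendsto (fun x => A x (f x) - A x (g x)) l (𝓝 0) := by
  have hK : IsCompact (Icc (0 : ℝ) 1 ×ˢ Icc (-M) M) := isCompact_Icc.prod isCompact_Icc
  have hUC := Metric.uniformContinuousOn_iff.mp
    (hK.uniformContinuousOn_of_continuous hA.continuousOn)
  rw [Metric.tendsto_nhds]
  intro ε hε
  obtain ⟨δ, hδ, hAδ⟩ := hUC ε hε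
  filter_upwards [Metric.tendsto_nhds.mp h δ hδ] with x hx
  have hfract : Int.fract x ∈ Icc (0 : ℝ) 1 := ⟨Int.fract_nonneg x, (Int.fract_lt_one x).le⟩
  have hclose : dist (Int.fract x, f x) (Int.fract x, g x) < δ := by
    simpa [Prod.dist_eq, Real.dist_eq] using hx
  have key := hAδ _ ⟨hfract, abs_le.mp (hf x)⟩ _ ⟨hfract, abs_le.mp (hg x)⟩ hclose
  have hAfract (v : ℝ) : A (Int.fract x) v = A x v :=
    Function.Periodic.map_fract (f := (A · v)) (fun y => hper y v) x
  rwa [dist_zero_right, ← dist_eq_norm, ← hAfract, ← hAfract (g x)]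

theorem eq_zero_of_tendsto_of_tendsto_deriv_atTop {f : ℝ → ℝ} {a L : ℝ}
    (hf : Differentiable ℝ f) (hfa : Tendsto f atTop (𝓝 a))
    (hf' : Tendsto (deriv f) atTop (𝓝 L)) : L = 0 := by
  have hslope (x : ℝ) : ∃ c ∈ Ioo x (x + 1), deriv f c = f (x + 1) - f x := by
    obtain ⟨c, hc, h⟩ := exists_deriv_eq_slope f (lt_add_one x) hf.continuous.continuousOn
      hf.differentiableOn
    exact ⟨c, hc, by simpa using h⟩
  choose c hc hcf using hslope
  have hc_top : Tendsto c atTop atTop := tendsto_atTop_mono (fun x => (hc x).1.le) tendsto_id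
  have hdiff : Tendsto (fun x => f (x + 1) - f x) atTop (𝓝 (a - a)) :=
    (hfa.comp (tendsto_atTop_add_const_right _ 1 tendsto_id)).sub hfa
  rw [sub_self, ← funext hcf] at hdiff
  exact tendsto_nhds_unique (hf'.comp hc_top) hdiff

theorem eq_zero_of_tendsto_of_tendsto_deriv_atBot {f : ℝ → ℝ} {a L : ℝ}
    (hf : Differentiable ℝ f) (hfa : Tendsto f atBot (𝓝 a))
    (hf' : Tendsto (deriv f) atBot (𝓝 L)) : L = 0 := by
  have hderiv : deriv (fun x => f (-x)) = fun x => -deriv f (-x) := funext (deriv_comp_neg f)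
  have := eq_zero_of_tendsto_of_tendsto_deriv_atTop (hf.comp differentiable_neg)
    (hfa.comp tendsto_neg_atTop_atBot) (hderiv ▸ (hf'.comp tendsto_neg_atTop_atBot).neg)
  exact neg_eq_zero.mp this

theorem exists_flux_sub_deriv_eq_const {A : ℝ → ℝ → ℝ} (hA : ContDiff ℝ 1 (Function.uncurry A))
    {u : ℝ → ℝ} (hu : ContDiff ℝ 2 u)
    (heq : ∀ x, -deriv (deriv u) x + deriv (fun z => A z (u z)) x = 0) :
    ∃ c, ∀ x, A x (u x) - deriv u x = c := by
  have hAu : Differentiable ℝ (fun z => A z (u z)) :=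
    (hA.differentiable one_ne_zero).comp (differentiable_id.prodMk (hu.differentiable two_ne_zero))
  have hu' : Differentiable ℝ (deriv u) :=
    (ContDiff.deriv' (n := 1) hu).differentiable one_ne_zero
  refine ⟨A 0 (u 0) - deriv u 0,
    fun x => is_const_of_deriv_eq_zero (hAu.sub hu') (fun y => ?_) x 0⟩
  rw [deriv_sub (hAu y) (hu' y)]
  linarith [heq y]

namespace PerStat

variable {A : ℝ → ℝ → ℝ} {α : ℝ} {v : ℝ → ℝ}

theorem differentiable (hv : PerStat A α v) : Differentiable ℝ v :=
  hv.1.differentiable one_ne_zero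

theorem exists_abs_le (hv : PerStat A α v) : ∃ M, ∀ x, |v x| ≤ M := by
  obtain ⟨M, hM⟩ := isBounded_iff_forall_norm_le.mp
    (Function.Periodic.isBounded_of_continuous (f := v) hv.2.1 one_ne_zero hv.1.continuous)
  exact ⟨M, fun x => by simpa using hM _ (mem_range_self x)⟩

theorem tendsto_deriv_sub (hv : PerStat A α v) (hA : Continuous (Function.uncurry A))
    (hper : ∀ y v, A (y + 1) v = A y v) {u : ℝ → ℝ} (hu : Differentiable ℝ u)
    (hub : ∃ M, ∀ x, |u x| ≤ M) {c : ℝ} (hc : ∀ x, A x (u x) - deriv u x = c) {l : Filter ℝ}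
    (h : Tendsto (fun x => u x - v x) l (𝓝 0)) :
    Tendsto (deriv fun x => u x - v x) l (𝓝 (α - c)) := by
  obtain ⟨Mu, hMu⟩ := hub
  obtain ⟨Mv, hMv⟩ := hv.exists_abs_le
  have hflux := tendsto_sub_of_periodic_of_tendsto_sub hA hper
    (fun x => (hMu x).trans (le_max_left Mu Mv)) (fun x => (hMv x).trans (le_max_right Mu Mv)) h
  have hderiv : deriv (fun x => u x - v x) = fun x => (A x (u x) - A x (v x)) + (α - c) := by
    ext x
    rw [deriv_fun_sub (hu x) (hv.differentiable x), hv.2.2 x]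
    linarith [hc x]
  simpa [hderiv] using hflux.add_const (α - c)

end PerStat

theorem standing_shock_necessary_condition_general
    (A : ℝ → ℝ → ℝ)
    (hA : ContDiff ℝ 1 (Function.uncurry A))
    (hper : ∀ y v, A (y + 1) v = A y v)
    (αl αr : ℝ) (vl vr : ℝ → ℝ)
    (hvl : PerStat A αl vl) (hvr : PerStat A αr vr)
    (u : ℝ → ℝ) (hu : ContDiff ℝ 2 u)
    (hub : ∃ M, ∀ x, |u x| ≤ M)
    (heq : ∀ x, -deriv (deriv u) x + deriv (fun z => A z (u z)) x = 0)
    (hl : Tendsto (fun x => u x - vl x) atBot (𝓝 0))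
    (hr : Tendsto (fun x => u x - vr x) atTop (𝓝 0)) :
    αl = αr ∧ ∀ x, -deriv u x + A x (u x) = αl := by
  obtain ⟨c, hc⟩ := exists_flux_sub_deriv_eq_const hA hu heq
  have hu1 : Differentiable ℝ u := hu.differentiable two_ne_zero
  have hαl : αl = c := sub_eq_zero.mp <|
    eq_zero_of_tendsto_of_tendsto_deriv_atBot (hu1.sub hvl.differentiable) hl
      (hvl.tendsto_deriv_sub hA.continuous hper hu1 hub hc hl)
  have hαr : αr = c := sub_eq_zero.mp <|
    eq_zero_of_tendsto_of_tendsto_deriv_atTop (hu1.sub hvr.differentiable) hr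
      (hvr.tendsto_deriv_sub hA.continuous hper hu1 hub hc hr)
  exact ⟨hαl.trans hαr.symm, fun x => by linarith [hc x]⟩

/-- necessary conditions satisfied by a standing shock
(Rankine-Hugoniot type condition). -/
theorem standing_shock_necessary_condition
    (A : ℝ → ℝ → ℝ)
    (hA : ContDiff ℝ 1 (Function.uncurry A))
    (hper : ∀ y v, A (y + 1) v = A y v)
    (αl αr : ℝ) (vl vr : ℝ → ℝ)
    (hvl : PerStat A αl vl) (hvr : PerStat A αr vr)
    (u : ℝ → ℝ) (hu : ContDiff ℝ 2 u)
    (hub : ∃ M, ∀ x, |u x| ≤ M)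
    (hub' : ∃ M, ∀ x, |deriv u x| ≤ M)
    (heq : ∀ x, -deriv (deriv u) x + deriv (fun z => A z (u z)) x = 0)
    (hl : Tendsto (fun x => u x - vl x) atBot (𝓝 0))
    (hr : Tendsto (fun x => u x - vr x) atTop (𝓝 0)) :
    αl = αr ∧ ∀ x, -deriv u x + A x (u x) = αl :=
  standing_shock_necessary_condition_general A hA hper αl αr vl vr hvl hvr u hu hub heq hl hr
end

section
/- Let α ∈ ℝ and let v_-, v_+ be periodic stationary solutions with constant α such that v_-(x) < v_+(x) for all x ∈ ℝ. Let u₀ ∈ ℝ with v_-(0) < u₀ < v_+(0), and let u : ℝ → ℝ be the (global) solution of u'(x) = A(x,u(x)) − α with u(0) = u₀. Then there exist periodic stationary solutions w_l and w_r with constant α, satisfying v_-(x) ≤ w_l(x) ≤ v_+(x) and v_-(x) ≤ w_r(x) ≤ v_+(x) for all x, such that u(x) − w_l(x) → 0 as x → −∞ and u(x) − w_r(x) → 0 as x → +∞. -/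
open MeasureTheory Filter Set Topology

/-!
Solutions of the periodic equation `u' = A(x, u) - α` cannot cross (uniqueness plus the
intermediate value theorem). Comparing `u` with its translate `u(· + 1)` shows that
`k ↦ u(x + k)` is monotone or antitone on `ℤ`; trapped between `v₋` and `v₊`, it converges
as `k → ±∞` to a limit `w(x)`. The limit `w` is 1-periodic and solves the equation, by dominated convergence in
the integral form of the equation. Grönwall's inequality over one period then gives
`|u(x) - w(x)| ≤ e^K |u(⌊x⌋) - w(0)|`, which tends to `0`.
-/

open Function NNReal

theorem Function.Periodic.apply_fract {R β : Type*} [Ring R] [LinearOrder R] [FloorRing R]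
    {f : R → β} (hf : Periodic f 1) (x : R) : f (Int.fract x) = f x := by
  simpa only [mul_one, Int.self_sub_floor] using hf.sub_int_mul_eq (x := x) ⌊x⌋

theorem Function.Periodic.add_intCast {R β : Type*} [Ring R] {f : R → β} (hf : Periodic f 1)
    (x : R) (k : ℤ) : f (x + k) = f x := by
  simpa using hf.int_mul k x

theorem exists_tendsto_of_monotone_or_antitone {ι : Type*} [Preorder ι] {g : ι → ℝ}
    (hg : Monotone g ∨ Antitone g) (hb : BddBelow (range g)) (ha : BddAbove (range g)) :
    (∃ a, Tendsto g atBot (𝓝 a)) ∧ ∃ a, Tendsto g atTop (𝓝 a) :=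
  hg.elim (fun h => ⟨⟨_, tendsto_atBot_ciInf h hb⟩, ⟨_, tendsto_atTop_ciSup h ha⟩⟩)
    fun h => ⟨⟨_, tendsto_atBot_ciSup h ha⟩, ⟨_, tendsto_atTop_ciInf h hb⟩⟩

section ODE

variable {F : ℝ → ℝ → ℝ}

theorem exists_lipschitzOnWith_of_contDiff (hF : ContDiff ℝ 1 (uncurry F)) (a b : ℝ)
    {s : Set ℝ} (hs : Convex ℝ s) (hs' : IsCompact s) :
    ∃ K, ∀ t ∈ Icc a b, LipschitzOnWith K (F t) s := by
  obtain ⟨K, hK⟩ := hF.contDiffOn.exists_lipschitzOnWith one_ne_zero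
    ((convex_Icc a b).prod hs) (isCompact_Icc.prod hs')
  refine ⟨K, fun t ht y hy z hz => ?_⟩
  simpa [Prod.edist_eq] using hK (mk_mem_prod ht hy) (mk_mem_prod ht hz)

theorem exists_norm_le_of_periodic (hF : Continuous (uncurry F)) (hFper : Periodic F 1)
    {s : Set ℝ} (hs : IsCompact s) : ∃ M : ℝ≥0, ∀ t, ∀ y ∈ s, ‖F t y‖ ≤ M := by
  obtain ⟨C, hC⟩ :=
    (isCompact_Icc (a := (0 : ℝ)) (b := 1)).prod hs |>.exists_bound_of_continuousOn hF.continuousOn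
  refine ⟨C.toNNReal, fun t y hy => ?_⟩
  rw [← hFper.apply_fract t]
  exact (hC (Int.fract t, y) ⟨⟨Int.fract_nonneg t, (Int.fract_lt_one t).le⟩, hy⟩).trans
    (Real.le_coe_toNNReal C)

variable {f g : ℝ → ℝ}

theorem ODE_solution_comp_add_int (hFper : Periodic F 1)
    (hf : ∀ t, HasDerivAt f (F t (f t)) t) (k : ℤ) (t : ℝ) :
    HasDerivAt (fun s => f (s + k)) (F t (f (t + k))) t := by
  have := (hf (t + k)).comp_add_const t k
  rwa [hFper.add_intCast] at this

theorem ODE_solution_unique_of_contDiff_s4 (hF : ContDiff ℝ 1 (uncurry F))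
    (hf : ∀ t, HasDerivAt f (F t (f t)) t) (hg : ∀ t, HasDerivAt g (F t (g t)) t)
    {t₀ : ℝ} (heq : f t₀ = g t₀) : f = g := by
  ext t
  obtain ⟨a, b, ht, ht₀⟩ : ∃ a b, t ∈ Ioo a b ∧ t₀ ∈ Ioo a b :=
    ⟨min t t₀ - 1, max t t₀ + 1, by grind⟩
  have hfg : Continuous fun s => (f s, g s) :=
    continuous_iff_continuousAt.2 fun s => (hf s).continuousAt.prodMk (hg s).continuousAt
  obtain ⟨C, hC⟩ := (isCompact_Icc (a := a) (b := b)).exists_bound_of_continuousOn hfg.continuousOn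
  obtain ⟨K, hK⟩ := exists_lipschitzOnWith_of_contDiff hF a b (convex_closedBall 0 C)
    (isCompact_closedBall 0 C)
  refine ODE_solution_unique_of_mem_Ioo (fun s hs => hK s (Ioo_subset_Icc_self hs)) ht₀
    (fun s hs => ⟨hf s, ?_⟩) (fun s hs => ⟨hg s, ?_⟩) heq ht <;>
    rw [mem_closedBall_zero_iff]
  exacts [(norm_fst_le _).trans (hC s (Ioo_subset_Icc_self hs)),
    (norm_snd_le _).trans (hC s (Ioo_subset_Icc_self hs))]

theorem ODE_solution_le_of_le (hF : ContDiff ℝ 1 (uncurry F))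
    (hf : ∀ t, HasDerivAt f (F t (f t)) t) (hg : ∀ t, HasDerivAt g (F t (g t)) t)
    {t₀ : ℝ} (hle : f t₀ ≤ g t₀) (t : ℝ) : f t ≤ g t := by
  by_contra! hlt
  have hcont : Continuous fun s => f s - g s := continuous_iff_continuousAt.2 fun s =>
    (hf s).continuousAt.sub (hg s).continuousAt
  obtain ⟨s, -, hs⟩ := intermediate_value_uIcc hcont.continuousOn
    (mem_uIcc.2 (Or.inl ⟨sub_nonpos.2 hle, sub_nonneg.2 hlt.le⟩) : (0 : ℝ) ∈ uIcc _ _)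
  rw [ODE_solution_unique_of_contDiff_s4 hF hf hg (sub_eq_zero.1 hs)] at hlt
  exact hlt.false

theorem ODE_solution_monotone_or_antitone (hF : ContDiff ℝ 1 (uncurry F))
    (hFper : Periodic F 1) (hf : ∀ t, HasDerivAt f (F t (f t)) t) :
    (∀ x, Monotone fun k : ℤ => f (x + k)) ∨ ∀ x, Antitone fun k : ℤ => f (x + k) := by
  have hf₁ := ODE_solution_comp_add_int hFper hf 1
  rcases le_total (f 0) (f (0 + (1 : ℤ))) with h | h
  · refine .inl fun x => monotone_int_of_le_succ fun k => ?_
    simpa [add_assoc] using ODE_solution_le_of_le hF hf hf₁ h (x + k)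
  · refine .inr fun x => antitone_int_of_succ_le fun k => ?_
    simpa [add_assoc] using ODE_solution_le_of_le hF hf₁ hf h (x + k)

theorem ODE_solution_of_tendsto {ι : Type*} {l : Filter ι} [l.NeBot] [l.IsCountablyGenerated]
    (hF : Continuous (uncurry F)) {s : Set ℝ} {M : ℝ≥0} (hM : ∀ t, ∀ y ∈ s, ‖F t y‖ ≤ M)
    {f : ι → ℝ → ℝ} {w : ℝ → ℝ} (hf : ∀ i t, HasDerivAt (f i) (F t (f i t)) t)
    (hfs : ∀ i t, f i t ∈ s) (hw : ∀ t, Tendsto (fun i => f i t) l (𝓝 (w t))) (t : ℝ) :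
    HasDerivAt w (F t (w t)) t := by
  have hcomp {g : ℝ → ℝ} (hg : Continuous g) : Continuous fun t => F t (g t) :=
    hF.comp (continuous_id.prodMk hg)
  have hlip (i : ι) : LipschitzWith M (f i) :=
    lipschitzWith_of_nnnorm_deriv_le (fun t => (hf i t).differentiableAt) fun t => by
      rw [(hf i t).deriv, ← NNReal.coe_le_coe, coe_nnnorm]
      exact hM t _ (hfs i t)
  have hwlip : LipschitzWith M w := .of_dist_le_mul fun x y =>
    le_of_tendsto_of_tendsto' ((hw x).dist (hw y)) tendsto_const_nhds
      fun i => (hlip i).dist_le_mul x y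
  have hint (x : ℝ) : w x = w 0 + ∫ s in (0 : ℝ)..x, F s (w s) := by
    have hfi (i : ι) : f i x = f i 0 + ∫ s in (0 : ℝ)..x, F s (f i s) := by
      rw [intervalIntegral.integral_eq_sub_of_hasDerivAt (fun s _ => hf i s)
        ((hcomp (hlip i).continuous).intervalIntegrable _ _)]
      ring
    refine tendsto_nhds_unique (hw x) ?_
    simp_rw [hfi]
    refine (hw 0).add (intervalIntegral.tendsto_integral_filter_of_dominated_convergence
      (fun _ => (M : ℝ)) (.of_forall fun i => (hcomp (hlip i).continuous).aestronglyMeasurable)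
      (.of_forall fun i => ae_of_all _ fun s _ => hM s _ (hfs i s)) intervalIntegrable_const
      (ae_of_all _ fun s _ => ?_))
    exact ((hF.comp (Continuous.prodMk_right s)).tendsto (w s)).comp (hw s)
  have hFw := hcomp hwlip.continuous
  refine (EventuallyEq.hasDerivAt_iff (.of_forall hint)).2 (HasDerivAt.const_add _ ?_)
  exact intervalIntegral.integral_hasDerivAt_right (hFw.intervalIntegrable _ _)
    (hFw.stronglyMeasurableAtFilter _ _) hFw.continuousAt

theorem dist_le_of_periodic_ODE_solutions (hFper : Periodic F 1) {K : ℝ≥0} {s : Set ℝ}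
    (hK : ∀ t ∈ Icc (0 : ℝ) 1, LipschitzOnWith K (F t) s)
    (hf : ∀ t, HasDerivAt f (F t (f t)) t) (hfs : ∀ t, f t ∈ s)
    (hg : ∀ t, HasDerivAt g (F t (g t)) t) (hgs : ∀ t, g t ∈ s) (hgper : Periodic g 1)
    (x : ℝ) : dist (f x) (g x) ≤ dist (f ⌊x⌋) (g 0) * Real.exp K := by
  have hshift := ODE_solution_comp_add_int hFper hf ⌊x⌋
  have hfract : Int.fract x ∈ Icc (0 : ℝ) 1 := ⟨Int.fract_nonneg x, (Int.fract_lt_one x).le⟩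
  have hgron := dist_le_of_trajectories_ODE_of_mem (v := F) (s := fun _ => s)
    (fun t ht => hK t (Ico_subset_Icc_self ht)) (HasDerivAt.continuousOn fun t _ => hshift t)
    (fun t _ => (hshift t).hasDerivWithinAt) (fun t _ => hfs _)
    (HasDerivAt.continuousOn fun t _ => hg t) (fun t _ => (hg t).hasDerivWithinAt)
    (fun t _ => hgs t) le_rfl _ hfract
  calc dist (f x) (g x) = dist (f (Int.fract x + ⌊x⌋)) (g (Int.fract x)) := by
        rw [Int.fract_add_floor, hgper.apply_fract]
    _ ≤ dist (f (0 + ⌊x⌋)) (g 0) * Real.exp (K * (Int.fract x - 0)) := hgron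
    _ ≤ dist (f ⌊x⌋) (g 0) * Real.exp K := by
        rw [zero_add, sub_zero]
        gcongr
        exact mul_le_of_le_one_right K.coe_nonneg hfract.2

end ODE

section PerStat

variable {A : ℝ → ℝ → ℝ} {α : ℝ} {v : ℝ → ℝ}

theorem PerStat.periodic (hv : PerStat A α v) : Periodic v 1 := hv.2.1

theorem PerStat.hasDerivAt (hv : PerStat A α v) (x : ℝ) : HasDerivAt v (A x (v x) - α) x := by
  simpa only [hv.2.2 x] using (hv.1.differentiable one_ne_zero x).hasDerivAt

theorem perStat_of_hasDerivAt (hA : Continuous (uncurry A))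
    (hv : ∀ x, HasDerivAt v (A x (v x) - α) x) (hper : Periodic v 1) : PerStat A α v := by
  have hderiv : deriv v = fun x => A x (v x) - α := funext fun x => (hv x).deriv
  have hcont : Continuous v := continuous_iff_continuousAt.2 fun x => (hv x).continuousAt
  refine ⟨contDiff_one_iff_deriv.2 ⟨fun x => (hv x).differentiableAt, ?_⟩, hper,
    fun x => by rw [hderiv]⟩
  rw [hderiv]
  exact (hA.comp (continuous_id.prodMk hcont)).sub continuous_const

theorem perStat_and_tendsto_sub_of_tendsto_comp_add_int
    (hA : ContDiff ℝ 1 (uncurry A)) (hper : ∀ y v, A (y + 1) v = A y v)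
    {u w : ℝ → ℝ} {c d : ℝ} (hu : ∀ x, HasDerivAt u (A x (u x) - α) x)
    (huc : ∀ x, u x ∈ Icc c d) {l : Filter ℤ} [l.NeBot] [l.IsCountablyGenerated]
    (hl : Tendsto (· + 1) l l) {L : Filter ℝ} (hL : Tendsto Int.floor L l)
    (hw : ∀ x, Tendsto (fun k : ℤ => u (x + k)) l (𝓝 (w x))) :
    PerStat A α w ∧ Tendsto (fun x => u x - w x) L (𝓝 0) := by
  set F : ℝ → ℝ → ℝ := fun x y => A x y - α
  have hF : ContDiff ℝ 1 (uncurry F) := hA.sub contDiff_const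
  have hFper : Periodic F 1 := fun x => funext fun y => congrArg (· - α) (hper x y)
  have hwc (x : ℝ) : w x ∈ Icc c d :=
    isClosed_Icc.mem_of_tendsto (hw x) (.of_forall fun k => huc _)
  have hwper : Periodic w 1 := fun x => tendsto_nhds_unique (hw (x + 1)) <| by
    convert (hw x).comp hl using 2 with k
    simp only [comp_apply, Int.cast_add, Int.cast_one]
    ring_nf
  obtain ⟨M, hM⟩ := exists_norm_le_of_periodic hF.continuous hFper (isCompact_Icc (a := c) (b := d))
  have hwsol := ODE_solution_of_tendsto (F := F) hF.continuous hM
    (ODE_solution_comp_add_int hFper hu) (fun k t => huc _) hw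
  obtain ⟨K, hK⟩ := exists_lipschitzOnWith_of_contDiff hF 0 1 (convex_Icc c d) isCompact_Icc
  refine ⟨perStat_of_hasDerivAt hA.continuous hwsol hwper, squeeze_zero_norm
    (a := fun x => dist (u ⌊x⌋) (w 0) * Real.exp K) (fun x => ?_) ?_⟩
  · rw [← dist_eq_norm]
    exact dist_le_of_periodic_ODE_solutions hFper hK hu huc hwsol hwc hwper x
  · simpa [comp_def] using (((hw 0).dist (tendsto_const_nhds (x := w 0))).mul_const (Real.exp K)).comp hL

end PerStat

theorem shock_ode_asymptotic_states_general
    (A : ℝ → ℝ → ℝ)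
    (hA : ContDiff ℝ 1 (Function.uncurry A))
    (hper : ∀ y v, A (y + 1) v = A y v)
    (α : ℝ) (vm vp : ℝ → ℝ)
    (hvm : PerStat A α vm) (hvp : PerStat A α vp)
    (u₀ : ℝ) (h₀l : vm 0 < u₀) (h₀r : u₀ < vp 0)
    (u : ℝ → ℝ)
    (hu : ∀ x, HasDerivAt u (A x (u x) - α) x)
    (hu0 : u 0 = u₀) :
    ∃ wl wr : ℝ → ℝ, PerStat A α wl ∧ PerStat A α wr ∧
      (∀ x, vm x ≤ wl x ∧ wl x ≤ vp x) ∧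
      (∀ x, vm x ≤ wr x ∧ wr x ≤ vp x) ∧
      Tendsto (fun x => u x - wl x) atBot (𝓝 0) ∧
      Tendsto (fun x => u x - wr x) atTop (𝓝 0) := by
  have hF : ContDiff ℝ 1 (uncurry fun x y => A x y - α) := hA.sub contDiff_const
  have hFper : Periodic (fun x y => A x y - α) 1 :=
    fun x => funext fun y => congrArg (· - α) (hper x y)
  have hu_mem (x : ℝ) : u x ∈ Icc (vm x) (vp x) :=
    ⟨ODE_solution_le_of_le hF hvm.hasDerivAt hu (hu0 ▸ h₀l.le) x,
      ODE_solution_le_of_le hF hu hvp.hasDerivAt (hu0 ▸ h₀r.le) x⟩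
  have hshift_mem (x : ℝ) (k : ℤ) : u (x + k) ∈ Icc (vm x) (vp x) := by
    simpa only [hvm.periodic.add_intCast, hvp.periodic.add_intCast] using hu_mem (x + k)
  obtain ⟨c, hc⟩ := (hvm.periodic.compact_of_continuous one_ne_zero hvm.1.continuous).bddBelow
  obtain ⟨d, hd⟩ := (hvp.periodic.compact_of_continuous one_ne_zero hvp.1.continuous).bddAbove
  have huc (x : ℝ) : u x ∈ Icc c d :=
    ⟨(hc (mem_range_self x)).trans (hu_mem x).1, (hu_mem x).2.trans (hd (mem_range_self x))⟩
  have hlim (x : ℝ) := exists_tendsto_of_monotone_or_antitone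
    ((ODE_solution_monotone_or_antitone hF hFper hu).imp (· x) (· x))
    ⟨vm x, forall_mem_range.2 fun k => (hshift_mem x k).1⟩
    ⟨vp x, forall_mem_range.2 fun k => (hshift_mem x k).2⟩
  choose wl hwl using fun x => (hlim x).1
  choose wr hwr using fun x => (hlim x).2
  obtain ⟨hwlS, hwlt⟩ := perStat_and_tendsto_sub_of_tendsto_comp_add_int hA hper hu huc
    (tendsto_atBot_add_const_right _ 1 tendsto_id) tendsto_floor_atBot hwl
  obtain ⟨hwrS, hwrt⟩ := perStat_and_tendsto_sub_of_tendsto_comp_add_int hA hper hu huc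
    (tendsto_atTop_add_const_right _ 1 tendsto_id) tendsto_floor_atTop hwr
  exact ⟨wl, wr, hwlS, hwrS, fun x => isClosed_Icc.mem_of_tendsto (hwl x) (.of_forall (hshift_mem x)),
    fun x => isClosed_Icc.mem_of_tendsto (hwr x) (.of_forall (hshift_mem x)), hwlt, hwrt⟩

/-- the global solution of `u' = A(x,u) - α`, `u(0) = u₀`
converges at `±∞` to periodic stationary solutions with constant `α`, which
lie between `v₋` and `v₊`. -/
theorem shock_ode_asymptotic_states
    (A : ℝ → ℝ → ℝ)
    (hA : ContDiff ℝ 1 (Function.uncurry A))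
    (hper : ∀ y v, A (y + 1) v = A y v)
    (α : ℝ) (vm vp : ℝ → ℝ)
    (hvm : PerStat A α vm) (hvp : PerStat A α vp)
    (hlt : ∀ x, vm x < vp x)
    (u₀ : ℝ) (h₀l : vm 0 < u₀) (h₀r : u₀ < vp 0)
    (u : ℝ → ℝ)
    (hu : ∀ x, HasDerivAt u (A x (u x) - α) x)
    (hu0 : u 0 = u₀) :
    ∃ wl wr : ℝ → ℝ, PerStat A α wl ∧ PerStat A α wr ∧
      (∀ x, vm x ≤ wl x ∧ wl x ≤ vp x) ∧
      (∀ x, vm x ≤ wr x ∧ wr x ≤ vp x) ∧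
      Tendsto (fun x => u x - wl x) atBot (𝓝 0) ∧
      Tendsto (fun x => u x - wr x) atTop (𝓝 0) :=
  shock_ode_asymptotic_states_general A hA hper α vm vp hvm hvp u₀ h₀l h₀r u hu hu0
end

section
/- Let α ∈ ℝ, let v_l, v_r be periodic stationary solutions with constant α, and let U be a shock profile connecting v_l to v_r. Assume that ā_r := ∫₀¹ ∂_v A(y, v_r(y)) dy < 0. Then for every a ∈ (0, −ā_r) there exists a constant C_a > 0 such that |U(y) − v_r(y)| ≤ C_a · exp(−a y) for all y ≥ 0. -/
open MeasureTheory Filter Set Topology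

/-- A shock profile connecting `vl` to `vr`, with constant `α`. -/
def ShockProfile (A : ℝ → ℝ → ℝ) (α : ℝ) (vl vr U : ℝ → ℝ) : Prop :=
  ContDiff ℝ 1 U ∧ (∀ x, deriv U x = A x (U x) - α) ∧
  Filter.Tendsto (fun x => U x - vl x) Filter.atBot (nhds 0) ∧
  Filter.Tendsto (fun x => U x - vr x) Filter.atTop (nhds 0)

/-!
The difference `w = U - v_r` solves the linear equation `w' = c w`, where by the mean
value theorem `c(x) = ∫₀¹ ∂_v A(x, v_r(x) + s w(x)) ds`; hence `w(y) = w(0) exp (∫₀^y c)`.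
As `w → 0` and `∂_v A` is uniformly continuous on bounded strips (it is periodic in `x`),
`c` is asymptotic to the periodic function `b(x) = ∂_v A(x, v_r(x))`, whose primitive is
`ā_r y + O(1)`. So `∫₀^y c ≤ -a y + K` for every `a < -ā_r`.
-/

noncomputable def partialDerivSnd (A : ℝ → ℝ → ℝ) (p : ℝ × ℝ) : ℝ :=
  fderiv ℝ (Function.uncurry A) p (0, 1)

/-- The coefficient `c` with `A t (u t) - A t (v t) = c t * (u t - v t)`. -/
noncomputable def linearizedCoeff (A : ℝ → ℝ → ℝ) (v u : ℝ → ℝ) (t : ℝ) : ℝ :=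
  ∫ s in (0:ℝ)..1, partialDerivSnd A (t, v t + s * (u t - v t))

section PartialDeriv

variable {A : ℝ → ℝ → ℝ}

lemma hasDerivAt_partialDerivSnd (hA : Differentiable ℝ (Function.uncurry A)) (t v : ℝ) :
    HasDerivAt (A t) (partialDerivSnd A (t, v)) v :=
  (hA (t, v)).hasFDerivAt.comp_hasDerivAt v ((hasDerivAt_const v t).prodMk (hasDerivAt_id v))

lemma continuous_partialDerivSnd (hA : ContDiff ℝ 1 (Function.uncurry A)) :
    Continuous (partialDerivSnd A) :=
  (hA.continuous_fderiv one_ne_zero).clm_apply continuous_const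

lemma partialDerivSnd_add_period (hA : Differentiable ℝ (Function.uncurry A)) {p : ℝ}
    (hper : ∀ y v, A (y + p) v = A y v) (t v : ℝ) :
    partialDerivSnd A (t + p, v) = partialDerivSnd A (t, v) := by
  have hshift : A (t + p) = A t := funext (hper t)
  rw [← (hasDerivAt_partialDerivSnd hA (t + p) v).deriv, hshift,
    (hasDerivAt_partialDerivSnd hA t v).deriv]

lemma sub_eq_integral_partialDerivSnd_mul (hA : ContDiff ℝ 1 (Function.uncurry A))
    (t v z : ℝ) :
    A t (v + z) - A t v = (∫ s in (0:ℝ)..1, partialDerivSnd A (t, v + s * z)) * z := by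
  have hderiv : ∀ s ∈ uIcc (0:ℝ) 1,
      HasDerivAt (fun s => A t (v + s * z)) (partialDerivSnd A (t, v + s * z) * z) s := by
    intro s _
    have hline : HasDerivAt (fun s : ℝ => v + s * z) z s := by
      simpa using ((hasDerivAt_id s).mul_const z).const_add v
    exact (hasDerivAt_partialDerivSnd (hA.differentiable one_ne_zero) t _).comp s hline
  have hcont : Continuous fun s => partialDerivSnd A (t, v + s * z) * z :=
    ((continuous_partialDerivSnd hA).comp (by fun_prop)).mul continuous_const
  rw [← intervalIntegral.integral_mul_const,
    intervalIntegral.integral_eq_sub_of_hasDerivAt hderiv (hcont.intervalIntegrable 0 1)]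
  simp

lemma continuous_linearizedCoeff (hA : ContDiff ℝ 1 (Function.uncurry A)) {u v : ℝ → ℝ}
    (hu : Continuous u) (hv : Continuous v) : Continuous (linearizedCoeff A v u) := by
  have hcont : Continuous fun q : ℝ × ℝ =>
      partialDerivSnd A (q.1, v q.1 + q.2 * (u q.1 - v q.1)) :=
    (continuous_partialDerivSnd hA).comp (by fun_prop)
  exact intervalIntegral.continuous_parametric_intervalIntegral_of_continuous' hcont 0 1

lemma hasDerivAt_sub_of_hasDerivAt (hA : ContDiff ℝ 1 (Function.uncurry A)) {α : ℝ}
    {u v : ℝ → ℝ} (hu : ∀ x, HasDerivAt u (A x (u x) - α) x)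
    (hv : ∀ x, HasDerivAt v (A x (v x) - α) x) (x : ℝ) :
    HasDerivAt (fun x => u x - v x) (linearizedCoeff A v u x * (u x - v x)) x := by
  have hmvt := sub_eq_integral_partialDerivSnd_mul hA x (v x) (u x - v x)
  rw [add_sub_cancel] at hmvt
  exact ((hu x).sub (hv x)).congr_deriv (by rw [linearizedCoeff, ← hmvt]; ring)

end PartialDeriv

lemma eq_mul_exp_integral_of_hasDerivAt {w c : ℝ → ℝ} (hc : Continuous c)
    (hw : ∀ t, HasDerivAt w (c t * w t) t) (x : ℝ) :
    w x = w 0 * Real.exp (∫ t in (0:ℝ)..x, c t) := by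
  set G : ℝ → ℝ := fun x => ∫ t in (0:ℝ)..x, c t
  have hG : ∀ y, HasDerivAt G (c y) y := fun y =>
    intervalIntegral.integral_hasDerivAt_right (hc.intervalIntegrable 0 y)
      (hc.stronglyMeasurableAtFilter _ _) hc.continuousAt
  have hconst : ∀ y, HasDerivAt (fun y => w y * Real.exp (-G y)) 0 y := fun y =>
    ((hw y).mul (hG y).neg.exp).congr_deriv (by ring)
  have h := is_const_of_deriv_eq_zero (fun y => (hconst y).differentiableAt)
    (fun y => (hconst y).deriv) x 0
  simp only [G, intervalIntegral.integral_same, neg_zero, Real.exp_zero, mul_one] at h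
  rw [← h, mul_assoc, ← Real.exp_add, neg_add_cancel, Real.exp_zero, mul_one]

lemma exists_pos_abs_sub_lt_of_periodic {f : ℝ × ℝ → ℝ} (hf : Continuous f) {p : ℝ}
    (hp : 0 < p) (hper : ∀ t v, f (t + p, v) = f (t, v)) (R : ℝ) {ε : ℝ} (hε : 0 < ε) :
    ∃ δ > 0, ∀ t x y, |x| ≤ R → |y - x| < δ → |f (t, y) - f (t, x)| < ε := by
  obtain ⟨δ, hδ, hunif⟩ := Metric.uniformContinuousOn_iff.mp
    ((isCompact_Icc.prod isCompact_Icc).uniformContinuousOn_of_continuous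
      (s := Icc 0 p ×ˢ Icc (-(R + 1)) (R + 1)) hf.continuousOn) ε hε
  refine ⟨min δ 1, lt_min hδ one_pos, fun t x y hx hxy => ?_⟩
  have hxy' := lt_min_iff.mp hxy
  have hperiodic : Function.Periodic (fun t v => f (t, v)) p := fun t => funext (hper t)
  obtain ⟨t₀, ht₀, hft⟩ := hperiodic.exists_mem_Ico₀ hp t
  have hmem : ∀ z, |z| ≤ R + 1 → (t₀, z) ∈ Icc 0 p ×ˢ Icc (-(R + 1)) (R + 1) :=
    fun z hz => ⟨Ico_subset_Icc_self ht₀, abs_le.mp hz⟩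
  have hy : |y| ≤ R + 1 := by
    calc |y| = |(y - x) + x| := by rw [sub_add_cancel]
      _ ≤ |y - x| + |x| := abs_add_le _ _
      _ ≤ R + 1 := by linarith [hxy'.2]
  have hclose := hunif _ (hmem y hy) _ (hmem x (by linarith))
    (by simpa [Prod.dist_eq, Real.dist_eq] using hxy'.1)
  rw [Real.dist_eq] at hclose
  rwa [congrFun hft y, congrFun hft x]

lemma tendsto_linearizedCoeff_sub_partialDerivSnd {A : ℝ → ℝ → ℝ}
    (hA : ContDiff ℝ 1 (Function.uncurry A)) {p : ℝ} (hp : 0 < p)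
    (hper : ∀ y v, A (y + p) v = A y v) {u v : ℝ → ℝ} (hv : Bornology.IsBounded (range v))
    (huv : Tendsto (fun t => u t - v t) atTop (𝓝 0)) :
    Tendsto (fun t => linearizedCoeff A v u t - partialDerivSnd A (t, v t)) atTop (𝓝 0) := by
  obtain ⟨R, hR⟩ := isBounded_iff_forall_norm_le.mp hv
  refine Metric.tendsto_nhds.mpr fun ε hε => ?_
  obtain ⟨δ, hδ, hunif⟩ := exists_pos_abs_sub_lt_of_periodic (continuous_partialDerivSnd hA) hp
    (partialDerivSnd_add_period (hA.differentiable one_ne_zero) hper) R (half_pos hε)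
  filter_upwards [Metric.tendsto_nhds.mp huv δ hδ] with t ht
  rw [Real.dist_0_eq_abs] at ht ⊢
  have hint : Continuous fun s : ℝ => partialDerivSnd A (t, v t + s * (u t - v t)) :=
    (continuous_partialDerivSnd hA).comp (by fun_prop)
  have hdiff : linearizedCoeff A v u t - partialDerivSnd A (t, v t) =
      ∫ s in (0:ℝ)..1, (partialDerivSnd A (t, v t + s * (u t - v t)) -
        partialDerivSnd A (t, v t)) := by
    rw [intervalIntegral.integral_sub (hint.intervalIntegrable 0 1) intervalIntegrable_const]
    simp [linearizedCoeff]
  have hbound : |linearizedCoeff A v u t - partialDerivSnd A (t, v t)| ≤ ε / 2 * |1 - 0| := by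
    rw [hdiff, ← Real.norm_eq_abs]
    refine intervalIntegral.norm_integral_le_of_norm_le_const fun s hs => (hunif t _ _
      (hR _ (mem_range_self t)) ?_).le
    rw [uIoc_of_le zero_le_one] at hs
    rw [add_sub_cancel_left, abs_mul, abs_of_pos hs.1]
    nlinarith [abs_nonneg (u t - v t), hs.2]
  linarith [show ε / 2 * |(1:ℝ) - 0| = ε / 2 by norm_num]

lemma Function.Periodic.exists_abs_intervalIntegral_sub_le {b : ℝ → ℝ} {p : ℝ}
    (hbp : Function.Periodic b p) (hp : p ≠ 0) (hb : Continuous b) :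
    ∃ M, ∀ x, |(∫ t in (0:ℝ)..x, b t) - x / p * ∫ t in (0:ℝ)..p, b t| ≤ M := by
  set P : ℝ → ℝ := fun x => (∫ t in (0:ℝ)..x, b t) - x / p * ∫ t in (0:ℝ)..p, b t
  have hper : Function.Periodic P p := by
    intro x
    have hadd := hbp.intervalIntegral_add_eq_add 0 x
      (fun t₁ t₂ => hb.intervalIntegrable t₁ t₂)
    rw [zero_add] at hadd
    simp only [P, hadd]
    field_simp
    ring
  have hcont : Continuous P := by
    have := intervalIntegral.continuous_primitive (μ := volume)
      (fun t₁ t₂ => hb.intervalIntegrable t₁ t₂) 0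
    fun_prop
  obtain ⟨M, hM⟩ := isBounded_iff_forall_norm_le.mp (hper.isBounded_of_continuous hp hcont)
  exact ⟨M, fun x => hM _ (mem_range_self x)⟩

lemma exists_intervalIntegral_le_of_eventually_abs_le {d : ℝ → ℝ} (hd : Continuous d) {ε : ℝ}
    (h : ∀ᶠ t in atTop, |d t| ≤ ε) :
    ∃ K, ∀ x, 0 ≤ x → ∫ t in (0:ℝ)..x, d t ≤ ε * x + K := by
  obtain ⟨T, hT0, hT⟩ : ∃ T, 0 ≤ T ∧ ∀ t, T ≤ t → |d t| ≤ ε := by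
    obtain ⟨T, hT⟩ := eventually_atTop.mp h
    exact ⟨max T 0, le_max_right _ _, fun t ht => hT t (le_of_max_le_left ht)⟩
  obtain ⟨S, hS⟩ :=
    (isCompact_Icc (a := 0) (b := T)).exists_bound_of_continuousOn hd.continuousOn
  have hε : 0 ≤ ε := (abs_nonneg _).trans (hT T le_rfl)
  refine ⟨S * T, fun x hx => ?_⟩
  set m := min x T
  have hm0 : 0 ≤ m := le_min hx hT0
  have hhead : |∫ t in (0:ℝ)..m, d t| ≤ S * |m - 0| := by
    rw [← Real.norm_eq_abs]
    refine intervalIntegral.norm_integral_le_of_norm_le_const fun t ht => ?_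
    rw [uIoc_of_le hm0] at ht
    exact hS t ⟨ht.1.le, ht.2.trans (min_le_right _ _)⟩
  have htail : |∫ t in m..x, d t| ≤ ε * |x - m| := by
    rw [← Real.norm_eq_abs]
    refine intervalIntegral.norm_integral_le_of_norm_le_const fun t ht => ?_
    rw [uIoc_of_le (min_le_left _ _)] at ht
    refine hT t (le_of_lt ?_)
    rcases min_lt_iff.mp ht.1 with hxt | hTt
    · exact absurd ht.2 (not_le.mpr hxt)
    · exact hTt
  have hS0 : 0 ≤ S := (norm_nonneg _).trans (hS 0 ⟨le_rfl, hT0⟩)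
  rw [sub_zero, abs_of_nonneg hm0] at hhead
  rw [abs_of_nonneg (sub_nonneg.mpr (min_le_left _ _))] at htail
  rw [← intervalIntegral.integral_add_adjacent_intervals (hd.intervalIntegrable 0 m)
    (hd.intervalIntegrable m x)]
  nlinarith [(abs_le.mp hhead).2, (abs_le.mp htail).2, min_le_right x T]

lemma exists_abs_le_mul_exp_of_hasDerivAt {w c b : ℝ → ℝ} {p a : ℝ}
    (hw : ∀ t, HasDerivAt w (c t * w t) t) (hc : Continuous c) (hb : Continuous b)
    (hbp : Function.Periodic b p) (hp : p ≠ 0)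
    (hcb : Tendsto (fun t => c t - b t) atTop (𝓝 0))
    (ha : a < -(∫ t in (0:ℝ)..p, b t) / p) :
    ∃ C, 0 < C ∧ ∀ y, 0 ≤ y → |w y| ≤ C * Real.exp (-a * y) := by
  set ε := -(∫ t in (0:ℝ)..p, b t) / p - a
  obtain ⟨M, hM⟩ := hbp.exists_abs_intervalIntegral_sub_le hp hb
  obtain ⟨K, hK⟩ := exists_intervalIntegral_le_of_eventually_abs_le (d := fun t => c t - b t)
    (hc.sub hb)
    ((Metric.tendsto_nhds.mp hcb ε (by linarith)).mono fun t ht => by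
      rw [Real.dist_0_eq_abs] at ht; exact ht.le)
  have hprim : ∀ y, 0 ≤ y → ∫ t in (0:ℝ)..y, c t ≤ -a * y + (M + K) := by
    intro y hy
    have hsplit :
        ∫ t in (0:ℝ)..y, c t = (∫ t in (0:ℝ)..y, b t) + ∫ t in (0:ℝ)..y, (c t - b t) := by
      rw [← intervalIntegral.integral_add (hb.intervalIntegrable 0 y)
        (g := fun t => c t - b t) ((hc.sub hb).intervalIntegrable 0 y)]
      simp
    have hlin : y / p * (∫ t in (0:ℝ)..p, b t) + ε * y = -a * y := by ring
    linarith [(abs_le.mp (hM y)).2, hK y hy]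
  refine ⟨(|w 0| + 1) * Real.exp (M + K), by positivity, fun y hy => ?_⟩
  calc |w y| = |w 0| * Real.exp (∫ t in (0:ℝ)..y, c t) := by
        rw [eq_mul_exp_integral_of_hasDerivAt hc hw y, abs_mul, Real.abs_exp]
    _ ≤ (|w 0| + 1) * Real.exp (-a * y + (M + K)) :=
        mul_le_mul (by linarith) (Real.exp_le_exp.mpr (hprim y hy)) (Real.exp_pos _).le
          (by positivity)
    _ = (|w 0| + 1) * Real.exp (M + K) * Real.exp (-a * y) := by rw [Real.exp_add]; ring

theorem shock_profile_exponential_convergence_general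
    (A : ℝ → ℝ → ℝ)
    (hA : ContDiff ℝ 1 (Function.uncurry A))
    (hper : ∀ y v, A (y + 1) v = A y v)
    (α : ℝ) (vl vr : ℝ → ℝ)
    (hvr : PerStat A α vr)
    (U : ℝ → ℝ) (hU : ShockProfile A α vl vr U) :
    ∀ a : ℝ, 0 < a → a < -(∫ y in (0:ℝ)..1, deriv (fun w => A y w) (vr y)) →
      ∃ C : ℝ, 0 < C ∧ ∀ y : ℝ, 0 ≤ y →
        |U y - vr y| ≤ C * Real.exp (-a * y) := by
  intro a _ ha
  obtain ⟨hUc, hUde, -, hUr⟩ := hU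
  obtain ⟨hvc, hvper, hvde⟩ := hvr
  have hUd : ∀ x, HasDerivAt U (A x (U x) - α) x := fun x =>
    hUde x ▸ (hUc.differentiable one_ne_zero x).hasDerivAt
  have hvd : ∀ x, HasDerivAt vr (A x (vr x) - α) x := fun x =>
    hvde x ▸ (hvc.differentiable one_ne_zero x).hasDerivAt
  have hA' : Differentiable ℝ (Function.uncurry A) := hA.differentiable one_ne_zero
  have hmean : ∫ y in (0:ℝ)..1, deriv (fun w => A y w) (vr y) =
      ∫ y in (0:ℝ)..1, partialDerivSnd A (y, vr y) :=
    intervalIntegral.integral_congr fun y _ =>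
      (hasDerivAt_partialDerivSnd hA' y (vr y)).deriv
  have hbper : Function.Periodic (fun t => partialDerivSnd A (t, vr t)) 1 := fun t => by
    simp only [hvper t, partialDerivSnd_add_period hA' hper]
  have hvbdd : Bornology.IsBounded (range vr) :=
    Function.Periodic.isBounded_of_continuous (f := vr) hvper one_ne_zero hvc.continuous
  exact exists_abs_le_mul_exp_of_hasDerivAt (b := fun t => partialDerivSnd A (t, vr t))
    (hasDerivAt_sub_of_hasDerivAt hA hUd hvd)
    (continuous_linearizedCoeff hA hUc.continuous hvc.continuous)
    ((continuous_partialDerivSnd hA).comp (by fun_prop)) hbper one_ne_zero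
    (tendsto_linearizedCoeff_sub_partialDerivSnd hA one_pos hper hvbdd hUr)
    (by rwa [div_one, ← hmean])

/-- exponential convergence of a shock profile towards its right
asymptotic state when `ā_r = ∫₀¹ ∂_v A(y, v_r(y)) dy < 0`. -/
theorem shock_profile_exponential_convergence
    (A : ℝ → ℝ → ℝ)
    (hA : ContDiff ℝ 1 (Function.uncurry A))
    (hper : ∀ y v, A (y + 1) v = A y v)
    (α : ℝ) (vl vr : ℝ → ℝ)
    (hvl : PerStat A α vl) (hvr : PerStat A α vr)
    (U : ℝ → ℝ) (hU : ShockProfile A α vl vr U)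
    (har : (∫ y in (0:ℝ)..1, deriv (fun w => A y w) (vr y)) < 0) :
    ∀ a : ℝ, 0 < a → a < -(∫ y in (0:ℝ)..1, deriv (fun w => A y w) (vr y)) →
      ∃ C : ℝ, 0 < C ∧ ∀ y : ℝ, 0 ≤ y →
        |U y - vr y| ≤ C * Real.exp (-a * y) :=
  shock_profile_exponential_convergence_general A hA hper α vl vr hvr U hU
end

section
/- Let U : ℝ → ℝ be bounded and measurable, let k be a positive integer, and suppose that U(x+k) ≥ U(x) for almost every x ∈ ℝ. Then the function x ↦ U(x+k) − U(x) is integrable on ℝ, and ∫_ℝ (U(x+k) − U(x)) dx ≤ 2k · sup_{x∈ℝ} |U(x)|. -/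
open MeasureTheory Filter Set Topology

/-! On `[-r, r]` the integral of `U (· + c) - U` telescopes to
`∫ in r..r + c, U - ∫ in -r..-r + c, U`, which is at most `2 |c| sup |U|`. The integrand is a.e.
nonnegative, so this bound, uniform in `r`, gives integrability and bounds the full integral. -/

theorem locallyIntegrable_of_abs_le {f : ℝ → ℝ} (hf : AEStronglyMeasurable f) {M : ℝ}
    (hM : ∀ x, |f x| ≤ M) : LocallyIntegrable f :=
  (locallyIntegrable_const M).mono hf <| .of_forall fun x =>
    (hM x).trans (le_abs_self M)

theorem intervalIntegral_sub_comp_add_right {f : ℝ → ℝ} (hf : LocallyIntegrable f)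
    (a b c : ℝ) :
    ∫ x in a..b, (f (x + c) - f x) = (∫ x in b..b + c, f x) - ∫ x in a..a + c, f x := by
  have hfi : ∀ a b : ℝ, IntervalIntegrable f volume a b := fun a b =>
    (hf.integrableOn_isCompact isCompact_uIcc).intervalIntegrable
  have hfc : IntervalIntegrable (fun x => f (x + c)) volume a b := by
    simpa using (hfi (a + c) (b + c)).comp_add_right c
  rw [intervalIntegral.integral_sub hfc (hfi a b),
    intervalIntegral.integral_comp_add_right,
    intervalIntegral.integral_interval_sub_interval_comm' (hfi _ _) (hfi _ _) (hfi _ _)]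

theorem abs_intervalIntegral_le_of_abs_le {f : ℝ → ℝ} {M : ℝ} (hM : ∀ x, |f x| ≤ M)
    (a c : ℝ) : |∫ x in a..a + c, f x| ≤ |c| * M := by
  simpa [mul_comm] using
    intervalIntegral.norm_integral_le_of_norm_le_const (f := f) (a := a) (b := a + c)
      fun x _ => hM x

theorem integrable_and_integral_le_of_intervalIntegral_le {g : ℝ → ℝ}
    (hg : LocallyIntegrable g) (hg_nonneg : 0 ≤ᵐ[volume] g) {C : ℝ}
    (hC : ∀ r, ∫ x in -r..r, g x ≤ C) :
    Integrable g ∧ ∫ x, g x ≤ C := by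
  have hnorm : ∀ r, ∫ x in -r..r, ‖g x‖ = ∫ x in -r..r, g x := fun r =>
    intervalIntegral.integral_congr_ae <| hg_nonneg.mono fun x hx _ => Real.norm_of_nonneg hx
  have hint : Integrable g :=
    integrable_of_intervalIntegral_norm_bounded C
      (fun r => (hg.integrableOn_isCompact isCompact_Icc).mono_set Ioc_subset_Icc_self)
      tendsto_neg_atTop_atBot tendsto_id (.of_forall fun r => (hnorm r).trans_le (hC r))
  exact ⟨hint, le_of_tendsto' (intervalIntegral_tendsto_integral hint tendsto_neg_atTop_atBot
    tendsto_id) hC⟩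

theorem integrable_sub_comp_add_right_of_ae_le {U : ℝ → ℝ} (hU : AEStronglyMeasurable U)
    {M : ℝ} (hM : ∀ x, |U x| ≤ M) {c : ℝ} (hmono : ∀ᵐ x, U x ≤ U (x + c)) :
    Integrable (fun x => U (x + c) - U x) ∧ ∫ x, (U (x + c) - U x) ≤ 2 * |c| * M := by
  have hUc : AEStronglyMeasurable fun x => U (x + c) :=
    hU.comp_measurePreserving (measurePreserving_add_right volume c)
  have hdiff : LocallyIntegrable fun x => U (x + c) - U x :=
    locallyIntegrable_of_abs_le (hUc.sub hU) fun x =>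
      (abs_sub _ _).trans (add_le_add (hM _) (hM _))
  refine integrable_and_integral_le_of_intervalIntegral_le hdiff
    (hmono.mono fun x hx => sub_nonneg.2 hx) fun r => ?_
  rw [intervalIntegral_sub_comp_add_right (locallyIntegrable_of_abs_le hU hM)]
  have h₁ := abs_intervalIntegral_le_of_abs_le hM r c
  have h₂ := abs_intervalIntegral_le_of_abs_le hM (-r) c
  linarith [(abs_le.1 h₁).2, (abs_le.1 h₂).1]

theorem translate_difference_integrable_general
    (U : ℝ → ℝ) (hmeas : Measurable U)
    (hbd : ∃ M, ∀ x, |U x| ≤ M)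
    (k : ℕ)
    (hmono : ∀ᵐ x : ℝ ∂volume, U x ≤ U (x + (k : ℝ))) :
    Integrable (fun x => U (x + (k : ℝ)) - U x) ∧
    (∫ x : ℝ, (U (x + (k : ℝ)) - U x)) ≤ 2 * (k : ℝ) * ⨆ x : ℝ, |U x| := by
  obtain ⟨M, hM⟩ := hbd
  have hle : ∀ x, |U x| ≤ ⨆ y, |U y| :=
    le_ciSup ⟨M, by rintro _ ⟨x, rfl⟩; exact hM x⟩
  simpa only [Nat.abs_cast] using
    integrable_sub_comp_add_right_of_ae_le hmeas.aestronglyMeasurable hle hmono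

/-- if `U` is bounded and measurable and `U(·+k) ≥ U` a.e. for a
positive integer `k`, then `U(·+k) − U` is integrable with integral at most
`2k · sup |U|`. -/
theorem translate_difference_integrable
    (U : ℝ → ℝ) (hmeas : Measurable U)
    (hbd : ∃ M, ∀ x, |U x| ≤ M)
    (k : ℕ) (hk : 0 < k)
    (hmono : ∀ᵐ x : ℝ ∂volume, U x ≤ U (x + (k : ℝ))) :
    Integrable (fun x => U (x + (k : ℝ)) - U x) ∧
    (∫ x : ℝ, (U (x + (k : ℝ)) - U x)) ≤ 2 * (k : ℝ) * ⨆ x : ℝ, |U x| :=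
  translate_difference_integrable_general U hmeas hbd k hmono
end

section
/- Let α ∈ ℝ, let v_-, v_+ be periodic stationary solutions with constant α such that v_-(x) < v_+(x) for all x, assume the Oleinik condition (every periodic stationary solution w with constant α satisfying v_- ≤ w ≤ v_+ pointwise equals v_- or v_+ identically), and let (v_l, v_r) be either (v_-, v_+) or (v_+, v_-). Let U be a shock profile connecting v_l to v_r, and let u ∈ L∞(ℝ) with u − U ∈ L¹(ℝ), ∫_ℝ (u − U) = 0, and v_-(y) ≤ u(y) ≤ v_+(y) for almost every y ∈ ℝ. Then for every ε > 0 there exist a function u^ε with u^ε − U ∈ L¹(ℝ) and ∫_ℝ (u^ε − U) = 0, and shock profiles U^ε_- and U^ε_+ connecting v_l to v_r, such that ‖u − u^ε‖_{L¹(ℝ)} ≤ ε and U^ε_-(y) ≤ u^ε(y) ≤ U^ε_+(y) for almost every y ∈ ℝ. -/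
open MeasureTheory Filter Set Topology

/-!
The integer translates `x ↦ U (x + k)` are again shock profiles. If `U (x + 1) = U x` at one
point, uniqueness for the ODE makes `U` periodic, hence equal to both of its end states; so
`U (x + 1) - U x` has a constant sign and the translates form a strictly monotone family through
`U` that converges pointwise to `v₋` and `v₊` as `k → ∓∞`. Clamping `u` between the translates by
`-k` and `k` moves it by at most `|u - U|`, so by dominated convergence the clamped function `c`
is `L¹`-close to `u`. Its mass `∫ (c - U)` is bounded by that `L¹` error, and is removed by
subtracting a multiple of `c - U(· - k)` (or adding one of `U(· + k) - c`) on a large interval: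
the strict inequalities `U(· - k) < U < U(· + k)` leave room of any prescribed mass there.
-/
open Function Metric

theorem Function.Periodic.tendsto_comp_add_intCast {f g : ℝ → ℝ} (hf : Periodic f 1)
    {l : Filter ℝ} (h : Tendsto (fun x => g x - f x) l (𝓝 0)) {x : ℝ} {l' : Filter ℤ}
    (hx : Tendsto (fun k : ℤ => x + k) l' l) :
    Tendsto (fun k : ℤ => g (x + k)) l' (𝓝 (f x)) := by
  have hlim := (h.comp hx).add_const (f x)
  rw [zero_add] at hlim
  refine hlim.congr fun k => ?_
  have hfk : f (x + k) = f x := by simpa using hf.int_mul k x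
  simp [hfk]

theorem tendsto_add_intCast_atTop (x : ℝ) : Tendsto (fun k : ℤ => x + k) atTop atTop :=
  tendsto_atTop_add_const_left _ x tendsto_intCast_atTop_atTop

theorem tendsto_add_intCast_atBot (x : ℝ) : Tendsto (fun k : ℤ => x + k) atBot atBot :=
  tendsto_atBot_add_const_left _ x (tendsto_intCast_atBot_iff.2 tendsto_id)

theorem Function.Periodic.eq_of_tendsto_sub {f g : ℝ → ℝ} (hf : Periodic f 1) (hg : Periodic g 1)
    {l : Filter ℝ} (h : Tendsto (fun x => g x - f x) l (𝓝 0)) {l' : Filter ℤ}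
    (hl : ∀ x : ℝ, Tendsto (fun k : ℤ => x + k) l' l) [l'.NeBot] : g = f := by
  funext x
  have hlim := hf.tendsto_comp_add_intCast h (hl x)
  have hgk : ∀ k : ℤ, g (x + k) = g x := fun k => by simpa using hg.int_mul k x
  simp only [hgk] at hlim
  exact tendsto_nhds_unique tendsto_const_nhds hlim

theorem ODE_solution_unique_of_locallyLipschitz {E : Type*} [NormedAddCommGroup E]
    [NormedSpace ℝ E] [ProperSpace E] {v : ℝ → E → E} (hv : LocallyLipschitz (uncurry v))
    {f g : ℝ → E} (hf : ∀ t, HasDerivAt f (v t (f t)) t) (hg : ∀ t, HasDerivAt g (v t (g t)) t)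
    {t₀ : ℝ} (heq : f t₀ = g t₀) : f = g := by
  funext t
  set a := min t t₀ - 1
  set b := max t t₀ + 1
  have hfc : ContinuousOn f (Icc a b) := fun s _ => (hf s).continuousAt.continuousWithinAt
  have hgc : ContinuousOn g (Icc a b) := fun s _ => (hg s).continuousAt.continuousWithinAt
  obtain ⟨Mf, hMf⟩ := isCompact_Icc.exists_bound_of_continuousOn hfc
  obtain ⟨Mg, hMg⟩ := isCompact_Icc.exists_bound_of_continuousOn hgc
  set M := max Mf Mg
  obtain ⟨K, hK⟩ := LocallyLipschitzOn.exists_lipschitzOnWith_of_compact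
    (isCompact_Icc.prod (isCompact_closedBall 0 M)) (hv.locallyLipschitzOn (s := Icc a b ×ˢ _))
  have hslice : ∀ s ∈ Ioo a b, LipschitzOnWith K (v s) (closedBall 0 M) := fun s hs => by
    have := hK.comp (LipschitzWith.prodMk_left s).lipschitzOnWith
      fun y hy => ⟨Ioo_subset_Icc_self hs, hy⟩
    rwa [mul_one] at this
  have hmem : ∀ s ∈ Ioo a b, ‖f s‖ ≤ M ∧ ‖g s‖ ≤ M := fun s hs =>
    ⟨(hMf s (Ioo_subset_Icc_self hs)).trans (le_max_left _ _),
      (hMg s (Ioo_subset_Icc_self hs)).trans (le_max_right _ _)⟩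
  refine ODE_solution_unique_of_mem_Ioo hslice (t₀ := t₀) ?_
    (fun s hs => ⟨hf s, mem_closedBall_zero_iff.2 (hmem s hs).1⟩)
    (fun s hs => ⟨hg s, mem_closedBall_zero_iff.2 (hmem s hs).2⟩) heq ?_
  · constructor <;> simp only [a, b] <;> linarith [min_le_right t t₀, le_max_right t t₀]
  · constructor <;> simp only [a, b] <;> linarith [min_le_left t t₀, le_max_left t t₀]

theorem forall_pos_or_forall_neg_of_ne_zero {f : ℝ → ℝ} (hf : Continuous f)
    (h : ∀ x, f x ≠ 0) : (∀ x, 0 < f x) ∨ ∀ x, f x < 0 := by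
  by_contra! hcon
  obtain ⟨⟨a, ha⟩, ⟨b, hb⟩⟩ := hcon
  obtain ⟨c, hc⟩ := intermediate_value_univ a b hf ⟨ha, hb⟩
  exact h c hc

namespace ShockProfile

variable {A : ℝ → ℝ → ℝ} {α : ℝ} {vl vr U : ℝ → ℝ}

theorem hasDerivAt (hU : ShockProfile A α vl vr U) (x : ℝ) : HasDerivAt U (A x (U x) - α) x := by
  rw [← hU.2.1 x]
  exact (hU.1.differentiable one_ne_zero x).hasDerivAt

theorem comp_add_intCast (hper : ∀ y v, A (y + 1) v = A y v) (hvl : Periodic vl 1)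
    (hvr : Periodic vr 1) (hU : ShockProfile A α vl vr U) (k : ℤ) :
    ShockProfile A α vl vr (fun x => U (x + k)) := by
  have hAk (x v : ℝ) : A (x + k) v = A x v := by
    simpa using (Periodic.int_mul (f := fun y => A y v) (fun y => hper y v) k) x
  have hvlk (x : ℝ) : vl (x + k) = vl x := by simpa using hvl.int_mul k x
  have hvrk (x : ℝ) : vr (x + k) = vr x := by simpa using hvr.int_mul k x
  refine ⟨hU.1.comp (contDiff_id.add contDiff_const), fun x => ?_, ?_, ?_⟩
  · rw [((hU.hasDerivAt (x + k)).comp_add_const x k).deriv, hAk]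
  · simpa [comp_def, hvlk] using
      hU.2.2.1.comp (tendsto_atBot_add_const_right _ (k : ℝ) tendsto_id)
  · simpa [comp_def, hvrk] using
      hU.2.2.2.comp (tendsto_atTop_add_const_right _ (k : ℝ) tendsto_id)

theorem tendsto_comp_add_intCast_atBot (hvl : Periodic vl 1) (hU : ShockProfile A α vl vr U)
    (x : ℝ) : Tendsto (fun k : ℤ => U (x + k)) atBot (𝓝 (vl x)) :=
  hvl.tendsto_comp_add_intCast hU.2.2.1 (tendsto_add_intCast_atBot x)

theorem tendsto_comp_add_intCast_atTop (hvr : Periodic vr 1) (hU : ShockProfile A α vl vr U)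
    (x : ℝ) : Tendsto (fun k : ℤ => U (x + k)) atTop (𝓝 (vr x)) :=
  hvr.tendsto_comp_add_intCast hU.2.2.2 (tendsto_add_intCast_atTop x)

theorem comp_add_one_ne (hA : ContDiff ℝ 1 (uncurry A)) (hper : ∀ y v, A (y + 1) v = A y v)
    (hvl : Periodic vl 1) (hvr : Periodic vr 1) (hne : vl ≠ vr) (hU : ShockProfile A α vl vr U)
    (x : ℝ) : U (x + 1) ≠ U x := by
  intro hx
  have hUper : Periodic U 1 := congrFun <|
    ODE_solution_unique_of_locallyLipschitz (v := fun t y => A t y - α)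
      (hA.sub contDiff_const).locallyLipschitz
      (fun t => by simpa [hper] using (hU.hasDerivAt (t + 1)).comp_add_const t 1)
      hU.hasDerivAt hx
  exact hne ((hvl.eq_of_tendsto_sub hUper hU.2.2.1 tendsto_add_intCast_atBot).symm.trans
    (hvr.eq_of_tendsto_sub hUper hU.2.2.2 tendsto_add_intCast_atTop))

theorem strictMono_or_strictAnti (hA : ContDiff ℝ 1 (uncurry A))
    (hper : ∀ y v, A (y + 1) v = A y v) (hvl : Periodic vl 1) (hvr : Periodic vr 1)
    (hne : vl ≠ vr) (hU : ShockProfile A α vl vr U) :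
    (∀ x, StrictMono fun k : ℤ => U (x + k)) ∨ ∀ x, StrictAnti fun k : ℤ => U (x + k) := by
  have hshift (x : ℝ) (k : ℤ) : U (x + ↑(k + 1)) = U (x + k + 1) := by
    rw [Int.cast_add, Int.cast_one, add_assoc]
  have hcont : Continuous fun x => U (x + 1) - U x := by
    have := hU.1.continuous
    fun_prop
  rcases forall_pos_or_forall_neg_of_ne_zero hcont
    (fun x => sub_ne_zero.2 (hU.comp_add_one_ne hA hper hvl hvr hne x)) with hpos | hneg
  · exact Or.inl fun x => strictMono_int_of_lt_succ fun k => by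
      rw [hshift]
      linarith [hpos (x + k)]
  · exact Or.inr fun x => strictAnti_int_of_succ_lt fun k => by
      rw [hshift]
      linarith [hneg (x + k)]

theorem exists_strictMono_family (hA : ContDiff ℝ 1 (uncurry A))
    (hper : ∀ y v, A (y + 1) v = A y v) {vm vp : ℝ → ℝ} (hvm : Periodic vm 1)
    (hvp : Periodic vp 1) (hlt : ∀ x, vm x < vp x)
    (hlr : (vl = vm ∧ vr = vp) ∨ (vl = vp ∧ vr = vm)) (hU : ShockProfile A α vl vr U) :
    ∃ T : ℤ → ℝ → ℝ, (∀ k, ShockProfile A α vl vr (T k)) ∧ T 0 = U ∧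
      (∀ x, StrictMono fun k => T k x) ∧
      (∀ x, Tendsto (fun k => T k x) atBot (𝓝 (vm x))) ∧
      ∀ x, Tendsto (fun k => T k x) atTop (𝓝 (vp x)) := by
  have hvl : Periodic vl 1 := by rcases hlr with ⟨rfl, -⟩ | ⟨rfl, -⟩ <;> assumption
  have hvr : Periodic vr 1 := by rcases hlr with ⟨-, rfl⟩ | ⟨-, rfl⟩ <;> assumption
  have hne : vl ≠ vr := by
    rcases hlr with ⟨rfl, rfl⟩ | ⟨rfl, rfl⟩ <;> intro h <;> linarith [hlt 0, congrFun h 0]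
  have hbot := hU.tendsto_comp_add_intCast_atBot hvl
  have htop := hU.tendsto_comp_add_intCast_atTop hvr
  rcases hU.strictMono_or_strictAnti hA hper hvl hvr hne with hmono | hanti
  · obtain ⟨rfl, rfl⟩ : vl = vm ∧ vr = vp := hlr.resolve_right fun ⟨hl, hr⟩ => by
      have := ((hmono 0).monotone.le_of_tendsto (hbot 0) 0).trans
        ((hmono 0).monotone.ge_of_tendsto (htop 0) 0)
      rw [hl, hr] at this
      linarith [hlt 0]
    exact ⟨fun k x => U (x + k), hU.comp_add_intCast hper hvl hvr, by simp, hmono, hbot, htop⟩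
  · obtain ⟨rfl, rfl⟩ : vl = vp ∧ vr = vm := hlr.resolve_left fun ⟨hl, hr⟩ => by
      have := ((hanti 0).antitone.le_of_tendsto (htop 0) 0).trans
        ((hanti 0).antitone.ge_of_tendsto (hbot 0) 0)
      rw [hl, hr] at this
      linarith [hlt 0]
    exact ⟨fun k x => U (x + ↑(-k)), fun k => hU.comp_add_intCast hper hvl hvr (-k), by simp,
      fun x _ _ hkj => hanti x (neg_lt_neg hkj), fun x => (htop x).comp tendsto_neg_atBot_atTop,
      fun x => (hbot x).comp tendsto_neg_atTop_atBot⟩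

end ShockProfile

theorem abs_sub_max_min_le {a b M t : ℝ} (haM : a ≤ M) (hMb : M ≤ b) :
    |t - max a (min t b)| ≤ |t - M| := by
  rcases le_total t a with hta | hat
  · rw [min_eq_left (hta.trans (haM.trans hMb)), max_eq_left hta, abs_of_nonpos (by linarith),
      abs_of_nonpos (by linarith)]
    linarith
  rcases le_total t b with htb | hbt
  · simp [min_eq_left htb, max_eq_right hat]
  · rw [min_eq_right hbt, max_eq_right (haM.trans hMb), abs_of_nonneg (by linarith),
      abs_of_nonneg (by linarith)]
    linarith

section Clamp

variable {X : Type*} [MeasurableSpace X] {μ : Measure X} {u U : X → ℝ}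

theorem integrable_sub_max_min (hu : AEStronglyMeasurable u μ)
    (huU : Integrable (fun x => u x - U x) μ) {L H : X → ℝ} (hL : AEStronglyMeasurable L μ)
    (hH : AEStronglyMeasurable H μ) (hLU : ∀ x, L x ≤ U x) (hUH : ∀ x, U x ≤ H x) :
    Integrable (fun x => u x - max (L x) (min (u x) (H x))) μ :=
  huU.abs.mono' (hu.sub (hL.sup (hu.inf hH)))
    (ae_of_all _ fun x => abs_sub_max_min_le (hLU x) (hUH x))

theorem tendsto_integral_abs_sub_max_min {ι : Type*} {l : Filter ι} [l.IsCountablyGenerated]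
    {a b : X → ℝ} {L H : ι → X → ℝ} (hu : AEStronglyMeasurable u μ)
    (huU : Integrable (fun x => u x - U x) μ) (hL : ∀ i, AEStronglyMeasurable (L i) μ)
    (hH : ∀ i, AEStronglyMeasurable (H i) μ) (hLUH : ∀ᶠ i in l, ∀ x, L i x ≤ U x ∧ U x ≤ H i x)
    (hLa : ∀ x, Tendsto (fun i => L i x) l (𝓝 (a x)))
    (hHb : ∀ x, Tendsto (fun i => H i x) l (𝓝 (b x)))
    (hab : ∀ᵐ x ∂μ, a x ≤ u x ∧ u x ≤ b x) :
    Tendsto (fun i => ∫ x, |u x - max (L i x) (min (u x) (H i x))| ∂μ) l (𝓝 0) := by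
  have hlim := tendsto_integral_filter_of_dominated_convergence (μ := μ) (f := fun _ => 0)
    (F := fun i x => |u x - max (L i x) (min (u x) (H i x))|) (fun x => |u x - U x|)
    (Eventually.of_forall fun i => (hu.sub ((hL i).sup (hu.inf (hH i)))).norm)
    (hLUH.mono fun i hi => ae_of_all _ fun x => by
      simpa using abs_sub_max_min_le (hi x).1 (hi x).2)
    huU.abs (hab.mono fun x hx => ?_)
  · simpa using hlim
  have hclamp := (hLa x).max ((tendsto_const_nhds (x := u x)).min (hHb x))
  rw [min_eq_left hx.2, max_eq_right hx.1] at hclamp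
  simpa using ((tendsto_const_nhds (x := u x)).sub hclamp).abs

end Clamp

theorem exists_integral_eq_of_le_setIntegral {X : Type*} [MeasurableSpace X] {μ : Measure X}
    {g : X → ℝ} {s : Set X} {m : ℝ} (hs : MeasurableSet s) (hg : IntegrableOn g s μ)
    (hg0 : ∀ x, 0 ≤ g x) (hm0 : 0 ≤ m) (hm : m ≤ ∫ x in s, g x ∂μ) :
    ∃ h : X → ℝ, Integrable h μ ∧ (∀ x, 0 ≤ h x ∧ h x ≤ g x) ∧ ∫ x, h x ∂μ = m := by
  set I := ∫ x in s, g x ∂μ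
  refine ⟨fun x => m / I * s.indicator g x, (hg.integrable_indicator hs).const_mul _,
    fun x => ⟨?_, ?_⟩, ?_⟩
  · exact mul_nonneg (div_nonneg hm0 (hm0.trans hm)) (indicator_nonneg (fun y _ => hg0 y) x)
  · calc m / I * s.indicator g x ≤ 1 * g x := by
          gcongr
          · exact indicator_nonneg (fun y _ => hg0 y) x
          · exact div_le_one_of_le₀ hm (hm0.trans hm)
          · exact indicator_le_self' (fun y _ => hg0 y) x
      _ = g x := one_mul _
  · rw [integral_const_mul, integral_indicator hs]
    change m / I * I = m
    rcases eq_or_ne I 0 with hI | hI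
    · rw [hI, mul_zero]
      linarith
    · exact div_mul_cancel₀ m hI

theorem exists_le_integral_sub_eq {L U c : ℝ → ℝ} (hL : Continuous L) (hU : Continuous U)
    (hLU : ∀ x, L x < U x) (hLc : ∀ x, L x ≤ c x) (hcU : Integrable (fun x => c x - U x))
    (hm : 0 ≤ ∫ x, (c x - U x)) :
    ∃ d : ℝ → ℝ, (∀ x, L x ≤ d x ∧ d x ≤ c x) ∧ Integrable (fun x => c x - d x) ∧
      ∫ x, (c x - d x) = ∫ x, (c x - U x) := by
  set m := ∫ x, (c x - U x)
  have hUL : Continuous fun x => U x - L x := hU.sub hL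
  set δ := ∫ x in Ioc (-1) 1, (U x - L x)
  have hδ : 0 < δ := by
    have := intervalIntegral.intervalIntegral_pos_of_pos_on (hUL.intervalIntegrable (-1) 1)
      (fun x _ => sub_pos.2 (hLU x)) (by norm_num)
    rwa [intervalIntegral.integral_of_le (by norm_num)] at this
  have hlim : Tendsto (fun R => ∫ x in Ioc (-R) R, (c x - U x)) atTop (𝓝 m) := by
    refine (intervalIntegral_tendsto_integral hcU tendsto_neg_atTop_atBot tendsto_id).congr' ?_
    filter_upwards [eventually_ge_atTop 0] with R hR
    exact intervalIntegral.integral_of_le (neg_le_self hR)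
  obtain ⟨R, hR1, hR⟩ := ((eventually_ge_atTop 1).and
    ((hlim.add_const δ).eventually_const_lt (lt_add_of_pos_right m hδ))).exists
  have hδR : δ ≤ ∫ x in Ioc (-R) R, (U x - L x) :=
    setIntegral_mono_set hUL.integrableOn_Ioc (ae_of_all _ fun x => sub_nonneg.2 (hLU x).le)
      (Ioc_subset_Ioc (by linarith) hR1).eventuallyLE
  have hcL : (fun x => c x - L x) = fun x => (c x - U x) + (U x - L x) := by
    ext x
    ring
  have hcL_int : IntegrableOn (fun x => c x - L x) (Ioc (-R) R) :=
    hcL ▸ hcU.integrableOn.add hUL.integrableOn_Ioc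
  have hcL_mass : m ≤ ∫ x in Ioc (-R) R, (c x - L x) := by
    rw [hcL, integral_add hcU.integrableOn hUL.integrableOn_Ioc]
    linarith
  obtain ⟨h, hh, hh_bounds, hh_mass⟩ := exists_integral_eq_of_le_setIntegral measurableSet_Ioc
    hcL_int (fun x => sub_nonneg.2 (hLc x)) hm hcL_mass
  refine ⟨fun x => c x - h x, fun x => ⟨?_, ?_⟩, by simpa using hh, by simpa using hh_mass⟩
  · linarith [(hh_bounds x).2]
  · linarith [(hh_bounds x).1]

theorem exists_between_integral_sub_eq_zero {L U H c : ℝ → ℝ} (hL : Continuous L)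
    (hU : Continuous U) (hH : Continuous H) (hLU : ∀ x, L x < U x) (hUH : ∀ x, U x < H x)
    (hLc : ∀ x, L x ≤ c x) (hcH : ∀ x, c x ≤ H x) (hcU : Integrable (fun x => c x - U x)) :
    ∃ d : ℝ → ℝ, (∀ x, L x ≤ d x ∧ d x ≤ H x) ∧ Integrable (fun x => d x - U x) ∧
      ∫ x, (d x - U x) = 0 ∧ Integrable (fun x => c x - d x) ∧
      ∫ x, |c x - d x| = |∫ x, (c x - U x)| := by
  suffices ∃ d : ℝ → ℝ, (∀ x, L x ≤ d x ∧ d x ≤ H x) ∧ ((∀ x, d x ≤ c x) ∨ ∀ x, c x ≤ d x) ∧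
      Integrable (fun x => c x - d x) ∧ ∫ x, (c x - d x) = ∫ x, (c x - U x) by
    obtain ⟨d, hLdH, hsign, hcd, hcd_mass⟩ := this
    have hdU : (fun x => d x - U x) = fun x => (c x - U x) - (c x - d x) := by
      ext x
      ring
    refine ⟨d, hLdH, hdU ▸ hcU.sub hcd, by rw [hdU, integral_sub hcU hcd, hcd_mass, sub_self],
      hcd, ?_⟩
    rw [← hcd_mass]
    rcases hsign with hdc | hcd_le
    · have hpos : 0 ≤ fun x => c x - d x := fun x => sub_nonneg.2 (hdc x)
      simp_rw [abs_of_nonneg (hpos _), abs_of_nonneg (integral_nonneg hpos)]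
    · have hneg : (fun x => c x - d x) ≤ 0 := fun x => sub_nonpos.2 (hcd_le x)
      simp_rw [abs_of_nonpos (hneg _), abs_of_nonpos (integral_nonpos hneg), integral_neg]
  rcases le_total 0 (∫ x, (c x - U x)) with hm | hm
  · obtain ⟨d, hd, hcd, hcd_mass⟩ := exists_le_integral_sub_eq hL hU hLU hLc hcU hm
    exact ⟨d, fun x => ⟨(hd x).1, (hd x).2.trans (hcH x)⟩, Or.inl fun x => (hd x).2, hcd, hcd_mass⟩
  · have hneg : (fun x => -c x - -U x) = fun x => -(c x - U x) := by
      ext x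
      ring
    obtain ⟨d, hd, hcd, hcd_mass⟩ := exists_le_integral_sub_eq (L := fun x => -H x)
      (U := fun x => -U x) (c := fun x => -c x) hH.neg hU.neg (fun x => neg_lt_neg (hUH x))
      (fun x => neg_le_neg (hcH x)) (hneg ▸ hcU.neg) (by rw [hneg, integral_neg]; linarith)
    have hcd' : (fun x => c x - -d x) = fun x => -(-c x - d x) := by
      ext x
      ring
    refine ⟨fun x => -d x, fun x => ⟨?_, ?_⟩, Or.inr fun x => ?_, hcd' ▸ hcd.neg, ?_⟩
    · linarith [hLc x, (hd x).2]
    · linarith [(hd x).1]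
    · linarith [(hd x).2]
    · rw [hcd', integral_neg, hcd_mass, hneg, integral_neg, neg_neg]

theorem integrable_sub_and_integral_abs_sub_le {X : Type*} [MeasurableSpace X] {μ : Measure X}
    {u U c d : X → ℝ} (huU : Integrable (fun x => u x - U x) μ) (hmass : ∫ x, (u x - U x) ∂μ = 0)
    (huc : Integrable (fun x => u x - c x) μ) (hcd : Integrable (fun x => c x - d x) μ)
    (hcd_mass : ∫ x, |c x - d x| ∂μ = |∫ x, (c x - U x) ∂μ|) :
    Integrable (fun x => u x - d x) μ ∧ ∫ x, |u x - d x| ∂μ ≤ 2 * ∫ x, |u x - c x| ∂μ := by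
  have hud : Integrable (fun x => u x - d x) μ :=
    (huc.add hcd).congr (ae_of_all _ fun x => sub_add_sub_cancel _ _ _)
  have hcU : ∫ x, (c x - U x) ∂μ = -∫ x, (u x - c x) ∂μ := by
    have : (fun x => c x - U x) = fun x => (u x - U x) - (u x - c x) := by
      ext x
      ring
    rw [this, integral_sub huU huc, hmass, zero_sub]
  refine ⟨hud, ?_⟩
  calc ∫ x, |u x - d x| ∂μ ≤ ∫ x, (|u x - c x| + |c x - d x|) ∂μ :=
        integral_mono hud.abs (huc.abs.add hcd.abs) fun x => abs_sub_le _ _ _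
    _ = ∫ x, |u x - c x| ∂μ + |∫ x, (u x - c x) ∂μ| := by
        rw [integral_add huc.abs hcd.abs, hcd_mass, hcU, abs_neg]
    _ ≤ 2 * ∫ x, |u x - c x| ∂μ := by
        linarith [abs_integral_le_integral_abs (μ := μ) (f := fun x => u x - c x)]

theorem approximation_between_shock_profiles_general
    (A : ℝ → ℝ → ℝ)
    (hA : ContDiff ℝ 1 (Function.uncurry A))
    (hper : ∀ y v, A (y + 1) v = A y v)
    (α : ℝ) (vm vp : ℝ → ℝ)
    (hvm : PerStat A α vm) (hvp : PerStat A α vp)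
    (hlt : ∀ x, vm x < vp x)
    (vl vr : ℝ → ℝ)
    (hlr : (vl = vm ∧ vr = vp) ∨ (vl = vp ∧ vr = vm))
    (U : ℝ → ℝ) (hU : ShockProfile A α vl vr U)
    (u : ℝ → ℝ)
    (huU : Integrable (fun x => u x - U x))
    (huU0 : (∫ x : ℝ, (u x - U x)) = 0)
    (hsq : ∀ᵐ y : ℝ ∂volume, vm y ≤ u y ∧ u y ≤ vp y) :
    ∀ ε : ℝ, 0 < ε →
      ∃ uε : ℝ → ℝ,
        Integrable (fun x => uε x - U x) ∧
        (∫ x : ℝ, (uε x - U x)) = 0 ∧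
        ∃ Um Up : ℝ → ℝ,
          ShockProfile A α vl vr Um ∧ ShockProfile A α vl vr Up ∧
          Integrable (fun x => u x - uε x) ∧
          (∫ x : ℝ, |u x - uε x|) ≤ ε ∧
          ∀ᵐ y : ℝ ∂volume, Um y ≤ uε y ∧ uε y ≤ Up y := by
  intro ε hε
  obtain ⟨T, hT, hT0, hT_mono, hT_bot, hT_top⟩ :=
    hU.exists_strictMono_family hA hper hvm.2.1 hvp.2.1 hlt hlr
  have hT_meas (k : ℤ) : AEStronglyMeasurable (T k) := (hT k).1.continuous.aestronglyMeasurable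
  have hT_lt (k : ℤ) (hk : 0 < k) (x : ℝ) : T (-k) x < U x ∧ U x < T k x := by
    rw [← hT0]
    exact ⟨hT_mono x (neg_neg_of_pos hk), hT_mono x hk⟩
  have hu : AEStronglyMeasurable u :=
    (huU.1.add hU.1.continuous.aestronglyMeasurable).congr (ae_of_all _ fun x => sub_add_cancel _ _)
  have hlim := tendsto_integral_abs_sub_max_min hu huU (fun k => hT_meas (-k)) hT_meas
    ((eventually_gt_atTop 0).mono fun k hk x => ⟨(hT_lt k hk x).1.le, (hT_lt k hk x).2.le⟩)
    (fun x => (hT_bot x).comp tendsto_neg_atTop_atBot) hT_top hsq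
  obtain ⟨k, hk, hk_err⟩ :=
    ((eventually_gt_atTop 0).and (hlim.eventually_lt_const (half_pos hε))).exists
  have huc := integrable_sub_max_min hu huU (hT_meas (-k)) (hT_meas k)
    (fun x => (hT_lt k hk x).1.le) (fun x => (hT_lt k hk x).2.le)
  obtain ⟨d, hd, hdU, hdU_mass, hcd, hcd_mass⟩ := exists_between_integral_sub_eq_zero
    (c := fun x => max (T (-k) x) (min (u x) (T k x)))
    (hT (-k)).1.continuous hU.1.continuous (hT k).1.continuous
    (fun x => (hT_lt k hk x).1) (fun x => (hT_lt k hk x).2) (fun x => le_max_left _ _)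
    (fun x => max_le ((hT_lt k hk x).1.trans (hT_lt k hk x).2).le (min_le_right _ _))
    ((huU.sub huc).congr (ae_of_all _ fun x => sub_sub_sub_cancel_left _ _ _))
  obtain ⟨hud, hud_err⟩ := integrable_sub_and_integral_abs_sub_le huU huU0 huc hcd hcd_mass
  exact ⟨d, hdU, hdU_mass, T (-k), T k, hT _, hT _, hud, by linarith, ae_of_all _ hd⟩

/-- approximation, in `L¹` and with zero total mass, of a datum
squeezed between `v₋` and `v₊` by one squeezed between two shock profiles. -/
theorem approximation_between_shock_profiles
    (A : ℝ → ℝ → ℝ)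
    (hA : ContDiff ℝ 1 (Function.uncurry A))
    (hper : ∀ y v, A (y + 1) v = A y v)
    (α : ℝ) (vm vp : ℝ → ℝ)
    (hvm : PerStat A α vm) (hvp : PerStat A α vp)
    (hlt : ∀ x, vm x < vp x)
    (holeinik : ∀ w : ℝ → ℝ, PerStat A α w →
      (∀ x, vm x ≤ w x ∧ w x ≤ vp x) → w = vm ∨ w = vp)
    (vl vr : ℝ → ℝ)
    (hlr : (vl = vm ∧ vr = vp) ∨ (vl = vp ∧ vr = vm))
    (U : ℝ → ℝ) (hU : ShockProfile A α vl vr U)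
    (u : ℝ → ℝ) (humeas : Measurable u) (hubd : ∃ M, ∀ x, |u x| ≤ M)
    (huU : Integrable (fun x => u x - U x))
    (huU0 : (∫ x : ℝ, (u x - U x)) = 0)
    (hsq : ∀ᵐ y : ℝ ∂volume, vm y ≤ u y ∧ u y ≤ vp y) :
    ∀ ε : ℝ, 0 < ε →
      ∃ uε : ℝ → ℝ,
        Integrable (fun x => uε x - U x) ∧
        (∫ x : ℝ, (uε x - U x)) = 0 ∧
        ∃ Um Up : ℝ → ℝ,
          ShockProfile A α vl vr Um ∧ ShockProfile A α vl vr Up ∧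
          Integrable (fun x => u x - uε x) ∧
          (∫ x : ℝ, |u x - uε x|) ≤ ε ∧
          ∀ᵐ y : ℝ ∂volume, Um y ≤ uε y ∧ uε y ≤ Up y :=
  approximation_between_shock_profiles_general A hA hper α vm vp hvm hvp hlt vl vr hlr U hU u huU
    huU0 hsq
end
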